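/- arXiv:1610.07380 — 11 statements merged into one kernel-verified Lean document; each statement's English description precedes it below -/
import Mathlib

section
/- Two ω-regular languages are equal if and only if they contain the same ultimately periodic words. Formally, if L and L' are ω-regular languages over a finite alphabet Σ, then L = L' iff UP(L) = UP(L'), where UP(L) = {u v^ω : u ∈ Σ*, v ∈ Σ⁺, u v^ω ∈ L}. -/
/-- Prepend a finite word to an infinite word. -/
def prependW {α : Type} (u : List α) (w : ℕ → α) : ℕ → α :=
  fun i => if h : i < u.length then u.get ⟨i, h⟩ else w (i - u.length)

/-- The periodic infinite word `v^ω` (arbitrary when `v = []`). -/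
def periodW {α : Type} [Inhabited α] (v : List α) : ℕ → α :=
  fun i => v.getD (i % v.length) default

/-- The ultimately periodic word `u · v^ω`. -/
def upw {α : Type} [Inhabited α] (u v : List α) : ℕ → α :=
  prependW u (periodW v)

/-- The ultimately periodic words of an ω-language. -/
def UP {α : Type} [Inhabited α] (L : Set (ℕ → α)) : Set (ℕ → α) :=
  { w | ∃ u v : List α, v ≠ [] ∧ w = upw u v ∧ w ∈ L }

/-- `v^k` : `k`-fold repetition of the finite word `v`. -/
def rep {α : Type} (v : List α) (k : ℕ) : List α :=
  (List.replicate k v).flatten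
/-- A nondeterministic Büchi automaton. -/
structure NBA (α : Type) : Type 1 where
  σ : Type
  fin : Fintype σ
  start : Set σ
  step : σ → α → Set σ
  accept : Set σ

/-- The ω-language of a Büchi automaton: words admitting a run visiting
an accepting state infinitely often. -/
def NBA.lang {α : Type} (B : NBA α) : Set (ℕ → α) :=
  { w | ∃ r : ℕ → B.σ, r 0 ∈ B.start ∧ (∀ i, r (i + 1) ∈ B.step (r i) (w i)) ∧
      ∀ n, ∃ m, n ≤ m ∧ r m ∈ B.accept }

/-- An ω-language is ω-regular if some Büchi automaton recognizes it. -/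
def IsOmegaRegular {α : Type} (L : Set (ℕ → α)) : Prop :=
  ∃ B : NBA α, B.lang = L

/-! Colour each pair `i < j` of positions of a word `w` by the transition profiles of the
factor `w[i, j)` in two automata. By Ramsey's theorem some cut points `g₀ < g₁ < ⋯` are
monochromatic, of an idempotent colour `e`; whether an automaton accepts `w` then depends only on
the profile of `w[0, g₁)` and on `e`, which `w` shares with `w[0, g₀) · w[g₀, g₁)^ω`. -/

open Filter

theorem exists_strictMono_monochromatic {C : Type*} [Finite C] (f : ℕ → ℕ → C) :
    ∃ g : ℕ → ℕ, StrictMono g ∧ ∃ c, ∀ i j, i < j → f (g i) (g j) = c := by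
  -- With `U` a nonprincipal ultrafilter, `χ i` is the colour of `f i j` for `U`-almost all `j`;
  -- `χ` is `U`-almost constant, and the `g k` are picked greedily from the `U`-large sets `T s`.
  let U := hyperfilter ℕ
  have eventually_eq (φ : ℕ → C) : ∃ c, ∀ᶠ x in (U : Filter ℕ), φ x = c :=
    U.eventually_exists_iff.1 (.of_forall fun x => ⟨φ x, rfl⟩)
  choose χ hχ using fun i => eventually_eq (f i)
  obtain ⟨c, hc⟩ := eventually_eq χ
  let T : Finset ℕ → Set ℕ := fun s => {j | χ j = c ∧ ∀ i ∈ s, i < j ∧ f i j = c}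
  have hT (s : Finset ℕ) (hs : ∀ i ∈ s, χ i = c) : ∀ᶠ j in (U : Filter ℕ), j ∈ T s :=
    hc.and <| (s.eventually_all).2 fun i hi =>
      (Eventually.filter_mono Nat.hyperfilter_le_atTop (eventually_gt_atTop i)).and (hs i hi ▸ hχ i)
  let next : Finset ℕ → ℕ := fun s => Classical.epsilon (· ∈ T s)
  let S : ℕ → Finset ℕ := fun k => Nat.rec ∅ (fun _ s => insert (next s) s) k
  have hS : ∀ k, next (S k) ∈ T (S k) ∧ ∀ i ∈ S k, χ i = c := by
    intro k
    induction k with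
    | zero => exact ⟨Classical.epsilon_spec (hT ∅ (by simp)).exists, by simp [S]⟩
    | succ k ih =>
      have hsub : ∀ i ∈ S (k + 1), χ i = c := by
        simpa [S] using ⟨ih.1.1, ih.2⟩
      exact ⟨Classical.epsilon_spec (hT _ hsub).exists, hsub⟩
  have hmem : ∀ i j, i < j → next (S i) ∈ S j := by
    intro i j hij
    induction j, hij using Nat.le_induction with
    | base => simp [S]
    | succ j _ ih => simp [S, ih]
  exact ⟨fun k => next (S k), fun i j hij => ((hS j).1.2 _ (hmem i j hij)).1, c,
    fun i j hij => ((hS j).1.2 _ (hmem i j hij)).2⟩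

theorem StrictMono.exists_le_lt_succ {n : ℕ → ℕ} (hn : StrictMono n) (hn0 : n 0 = 0) (k : ℕ) :
    ∃ i, n i ≤ k ∧ k < n (i + 1) := by
  obtain ⟨i, hi, hi'⟩ := hn.exists_between_of_tendsto_atTop hn.tendsto_atTop
    (x := k + 1) (by omega)
  exact ⟨i, by omega, by omega⟩

theorem exists_eq_on_blocks {β : Type*} {n : ℕ → ℕ} (hn : StrictMono n) (hn0 : n 0 = 0)
    (r : ℕ → ℕ → β) (hr : ∀ i, r (i + 1) (n (i + 1)) = r i (n (i + 1))) :
    ∃ R : ℕ → β, ∀ i k, n i ≤ k → k ≤ n (i + 1) → R k = r i k := by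
  choose blk hblk using hn.exists_le_lt_succ hn0
  refine ⟨fun k => r (blk k) k, fun i k hik hki => ?_⟩
  obtain ⟨hlo, hhi⟩ := hblk k
  rcases hki.lt_or_eq with hki | rfl
  · have : blk k = i := le_antisymm (by
      have := hlo.trans_lt hki; rw [hn.lt_iff_lt] at this; omega) (by
      have := hik.trans_lt hhi; rw [hn.lt_iff_lt] at this; omega)
    simp only [this]
  · have : blk (n (i + 1)) = i + 1 := le_antisymm (hn.le_iff_le.1 hlo) (by
      have := hn.lt_iff_lt.1 hhi; omega)
    simp only [this, hr]

section

variable {α : Type}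

theorem upw_map_range_apply [Inhabited α] (w : ℕ → α) {a l : ℕ} (hl : 0 < l) (k : ℕ) :
    upw ((List.range a).map w) ((List.range' a l).map w) k =
      if k < a then w k else w (a + (k - a) % l) := by
  simp only [upw, prependW, periodW, List.length_map, List.length_range, List.length_range']
  split_ifs with hk
  · simp
  · rw [List.getD_eq_getElem _ _ (by simpa using Nat.mod_lt _ hl)]
    simp

def profileComp {σ : Type} (P Q : Set (σ × σ × Bool)) : Set (σ × σ × Bool) :=
  {t | ∃ q f₁ f₂, (t.1, q, f₁) ∈ P ∧ (q, t.2.1, f₂) ∈ Q ∧ t.2.2 = (f₁ || f₂)}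

namespace NBA

variable (B : NBA α)

/-- Büchi's transition profile of the factor `w[a, b)`; the flag records a visit to an
accepting state. -/
def segProfile (w : ℕ → α) (a b : ℕ) : Set (B.σ × B.σ × Bool) :=
  {t | ∃ r : ℕ → B.σ, r a = t.1 ∧ r b = t.2.1 ∧
    (∀ i, a ≤ i → i < b → r (i + 1) ∈ B.step (r i) (w i)) ∧
    (t.2.2 = true → ∃ m, a < m ∧ m ≤ b ∧ r m ∈ B.accept)}

variable {B}

theorem segProfile_trans {w : ℕ → α} {a b c : ℕ} (hab : a ≤ b) (hbc : b ≤ c) :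
    B.segProfile w a c = profileComp (B.segProfile w a b) (B.segProfile w b c) := by
  ext ⟨p, q, f⟩
  constructor
  · rintro ⟨r, rfl, rfl, hstep, hacc⟩
    have left (f₁ : Bool) (h : f₁ = true → ∃ m, a < m ∧ m ≤ b ∧ r m ∈ B.accept) :
        (r a, r b, f₁) ∈ B.segProfile w a b :=
      ⟨r, rfl, rfl, fun i h₁ h₂ => hstep i h₁ (by omega), h⟩
    have right (f₂ : Bool) (h : f₂ = true → ∃ m, b < m ∧ m ≤ c ∧ r m ∈ B.accept) :
        (r b, r c, f₂) ∈ B.segProfile w b c :=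
      ⟨r, rfl, rfl, fun i h₁ h₂ => hstep i (by omega) h₂, h⟩
    cases f with
    | false => exact ⟨r b, false, false, left false nofun, right false nofun, rfl⟩
    | true =>
      obtain ⟨m, ham, hmc, hm⟩ := hacc rfl
      rcases le_or_gt m b with hmb | hbm
      · exact ⟨r b, true, false, left true fun _ => ⟨m, ham, hmb, hm⟩, right false nofun, rfl⟩
      · exact ⟨r b, false, true, left false nofun, right true fun _ => ⟨m, hbm, hmc, hm⟩, rfl⟩
  · rintro ⟨q', f₁, f₂, ⟨r₁, rfl, rfl, hstep₁, hacc₁⟩, ⟨r₂, hr₂, rfl, hstep₂, hacc₂⟩, rfl⟩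
    refine ⟨fun i => if i ≤ b then r₁ i else r₂ i, by simp [hab], ?_, fun i hai hic => ?_,
      fun hf => ?_⟩
    · rcases hbc.lt_or_eq with hbc | rfl
      · simp [hbc.not_ge]
      · simp [hr₂]
    · rcases lt_trichotomy i b with hib | rfl | hbi
      · simpa [hib.le, Nat.succ_le_of_lt hib] using hstep₁ i hai hib
      · simpa [hr₂] using hstep₂ i le_rfl hic
      · simpa [hbi.not_ge, (hbi.trans (Nat.lt_succ_self i)).not_ge] using
          hstep₂ i hbi.le hic
    · rcases Bool.or_eq_true_iff.1 hf with h | h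
      · obtain ⟨m, ham, hmb, hm⟩ := hacc₁ h
        exact ⟨m, ham, hmb.trans hbc, by simpa [hmb] using hm⟩
      · obtain ⟨m, hbm, hmc, hm⟩ := hacc₂ h
        exact ⟨m, hab.trans_lt hbm, hmc, by simpa [hbm.not_ge] using hm⟩

theorem segProfile_subset_of_agree {w w' : ℕ → α} {a a' l : ℕ}
    (h : ∀ k < l, w (a + k) = w' (a' + k)) :
    B.segProfile w a (a + l) ⊆ B.segProfile w' a' (a' + l) := by
  rintro ⟨p, q, f⟩ ⟨r, rfl, rfl, hstep, hacc⟩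
  refine ⟨fun i => r (a + (i - a')), by simp, by simp, fun i h₁ h₂ => ?_, fun hf => ?_⟩
  · have := hstep (a + (i - a')) (by omega) (by omega)
    rwa [h _ (by omega), show a' + (i - a') = i by omega,
      show a + (i - a') + 1 = a + (i + 1 - a') by omega] at this
  · obtain ⟨m, h₁, h₂, hm⟩ := hacc hf
    exact ⟨a' + (m - a), by omega, by omega, by
      show r (a + (a' + (m - a) - a')) ∈ _
      rwa [show a + (a' + (m - a) - a') = m by omega]⟩

theorem segProfile_congr {w w' : ℕ → α} {a a' l : ℕ} (h : ∀ k < l, w (a + k) = w' (a' + k)) :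
    B.segProfile w a (a + l) = B.segProfile w' a' (a' + l) :=
  (segProfile_subset_of_agree h).antisymm (segProfile_subset_of_agree fun k hk => (h k hk).symm)

theorem segProfile_eq_of_blocks {w : ℕ → α} {m : ℕ → ℕ} (hm : Monotone m)
    {e : Set (B.σ × B.σ × Bool)} (hblock : ∀ i, B.segProfile w (m i) (m (i + 1)) = e)
    (he : profileComp e e = e) {i j : ℕ} (hij : i < j) : B.segProfile w (m i) (m j) = e := by
  induction j, hij using Nat.le_induction with
  | base => exact hblock i
  | succ j hij ih => rw [segProfile_trans (hm (by omega : i ≤ j)) (hm j.le_succ), ih, hblock, he]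

theorem mem_lang_of_blocks {w : ℕ → α} {n : ℕ → ℕ} (hn : StrictMono n) (hn0 : n 0 = 0)
    (s : ℕ → B.σ) (f : ℕ → Bool) (hs : s 0 ∈ B.start)
    (hblock : ∀ i, (s i, s (i + 1), f i) ∈ B.segProfile w (n i) (n (i + 1)))
    (hf : ∀ N, ∃ i, N ≤ i ∧ f i = true) : w ∈ B.lang := by
  choose r hr_start hr_end hr_step hr_acc using hblock
  obtain ⟨R, hR⟩ := exists_eq_on_blocks hn hn0 r fun i => by rw [hr_start, hr_end]
  refine ⟨R, ?_, fun k => ?_, fun N => ?_⟩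
  · have h0 := hr_start 0
    rw [hn0] at h0
    rw [hR 0 0 hn0.le (Nat.zero_le _), h0]
    exact hs
  · obtain ⟨i, hik, hki⟩ := hn.exists_le_lt_succ hn0 k
    rw [hR i k hik hki.le, hR i (k + 1) (by omega) hki]
    exact hr_step i k hik hki
  · obtain ⟨i, hNi, hfi⟩ := hf N
    obtain ⟨m, him, hmi, hm⟩ := hr_acc i hfi
    exact ⟨m, by have := hn.le_apply (x := i); omega, by rwa [hR i m him.le hmi]⟩

theorem mem_lang_iff_of_monochromatic {w : ℕ → α} {g : ℕ → ℕ} (hg : StrictMono g)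
    {e : Set (B.σ × B.σ × Bool)} (he : ∀ i j, i < j → B.segProfile w (g i) (g j) = e) :
    w ∈ B.lang ↔ ∃ p q, p ∈ B.start ∧ (p, q, false) ∈ B.segProfile w 0 (g 1) ∧
      (q, q, true) ∈ e := by
  have hprefix (i : ℕ) (hi : 0 < i) : B.segProfile w 0 (g i) = B.segProfile w 0 (g 1) := by
    rw [segProfile_trans (Nat.zero_le _) (hg.monotone (Nat.zero_le i)), he 0 i hi,
      ← he 0 1 one_pos, ← segProfile_trans (Nat.zero_le _) (hg.monotone zero_le_one)]
  constructor
  · rintro ⟨r, hstart, hstep, hacc⟩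
    have := B.fin
    obtain ⟨q, hq⟩ := Finite.exists_infinite_fiber fun i => r (g i)
    have hq : {i | r (g i) = q}.Infinite := Set.infinite_coe_iff.1 hq
    obtain ⟨i, hi, hi0⟩ := hq.exists_gt 0
    obtain ⟨m, him, hm⟩ := hacc (g i + 1)
    obtain ⟨j, hj, hmj⟩ := hq.exists_gt (max i m)
    refine ⟨r 0, q, hstart, ?_, ?_⟩
    · rw [← hprefix i hi0]
      exact ⟨r, rfl, hi, fun k _ _ => hstep k, nofun⟩
    · rw [← he i j (by omega)]
      exact ⟨r, hi, hj, fun k _ _ => hstep k,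
        fun _ => ⟨m, by omega, by have := hg.le_apply (x := j); omega, hm⟩⟩
  · rintro ⟨p, q, hp, hpre, hloop⟩
    refine mem_lang_of_blocks (n := fun i => if i = 0 then 0 else g i)
      (strictMono_nat_of_lt_succ fun i => ?_) rfl (fun i => if i = 0 then p else q)
      (fun i => i ≠ 0) hp (fun i => ?_) (fun N => ⟨N + 1, by omega, by simp⟩)
    · rcases i with _ | i
      · simpa using (Nat.zero_le _).trans_lt (hg zero_lt_one)
      · simpa using hg (Nat.lt_succ_self _)
    · rcases i with _ | i
      · simpa using hpre
      · simpa [he (i + 1) (i + 2) (by omega)] using hloop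

variable [Inhabited α]

theorem mem_lang_iff_mem_lang_upw {w : ℕ → α} {g : ℕ → ℕ} (hg : StrictMono g)
    {e : Set (B.σ × B.σ × Bool)} (he : ∀ i j, i < j → B.segProfile w (g i) (g j) = e) :
    w ∈ B.lang ↔
      upw ((List.range (g 0)).map w) ((List.range' (g 0) (g 1 - g 0)).map w) ∈ B.lang := by
  set l := g 1 - g 0
  have hl : 0 < l := Nat.sub_pos_of_lt (hg zero_lt_one)
  set w' := upw ((List.range (g 0)).map w) ((List.range' (g 0) l).map w)
  have hw' (k : ℕ) : w' k = if k < g 0 then w k else w (g 0 + (k - g 0) % l) :=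
    upw_map_range_apply w hl k
  set m : ℕ → ℕ := fun i => g 0 + i * l
  have hm : StrictMono m := strictMono_nat_of_lt_succ fun i => by simp only [m]; nlinarith
  have hblock (i : ℕ) : B.segProfile w' (m i) (m (i + 1)) = e := by
    have hcongr : B.segProfile w' (m i) (m i + l) = B.segProfile w (g 0) (g 0 + l) :=
      segProfile_congr fun k hk => by
        rw [hw']
        simp only [m, show ¬ g 0 + i * l + k < g 0 by omega, if_false]
        rw [show g 0 + i * l + k - g 0 = k + l * i by ring_nf; omega, Nat.add_mul_mod_self_left,
          Nat.mod_eq_of_lt hk]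
    rw [show m (i + 1) = m i + l by simp only [m]; ring, hcongr,
      show g 0 + l = g 1 by omega, he 0 1 one_pos]
  have hidem : profileComp e e = e := by
    calc profileComp e e
        = profileComp (B.segProfile w (g 0) (g 1)) (B.segProfile w (g 1) (g 2)) := by
          rw [he 0 1 one_pos, he 1 2 one_lt_two]
      _ = e := by
          rw [← segProfile_trans (hg.monotone zero_le_one) (hg.monotone one_le_two), he 0 2 two_pos]
  have hprefix : B.segProfile w' 0 (m 1) = B.segProfile w 0 (g 1) := by
    have := segProfile_congr (B := B) (w := w') (w' := w) (a := 0) (a' := 0) (l := g 1)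
      fun k hk => by
        rw [hw']
        split_ifs with h
        · rfl
        · congr 1
          rw [Nat.mod_eq_of_lt (by omega)]
          omega
    simpa [m, show g 0 + l = g 1 by omega] using this
  rw [mem_lang_iff_of_monochromatic hg he,
    mem_lang_iff_of_monochromatic hm fun i j => segProfile_eq_of_blocks hm.monotone hblock hidem,
    hprefix]

theorem exists_upw_mem_lang_iff (B B' : NBA α) (w : ℕ → α) :
    ∃ u v : List α, v ≠ [] ∧ (w ∈ B.lang ↔ upw u v ∈ B.lang) ∧
      (w ∈ B'.lang ↔ upw u v ∈ B'.lang) := by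
  have := B.fin
  have := B'.fin
  obtain ⟨g, hg, _, hcol⟩ :=
    exists_strictMono_monochromatic fun i j => (B.segProfile w i j, B'.segProfile w i j)
  refine ⟨_, _, ?_, mem_lang_iff_mem_lang_upw hg fun i j h => congrArg Prod.fst (hcol i j h),
    mem_lang_iff_mem_lang_upw hg fun i j h => congrArg Prod.snd (hcol i j h)⟩
  simpa [Nat.sub_eq_zero_iff_le] using hg zero_lt_one

theorem lang_subset_of_UP_subset {B B' : NBA α} (h : UP B.lang ⊆ UP B'.lang) :
    B.lang ⊆ B'.lang := by
  intro w hw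
  obtain ⟨u, v, hv, hB, hB'⟩ := exists_upw_mem_lang_iff B B' w
  obtain ⟨-, -, -, -, hw'⟩ := h ⟨u, v, hv, rfl, hB.1 hw⟩
  exact hB'.2 hw'

end NBA

end

theorem stmt_0_general {α : Type} [Inhabited α] (L L' : Set (ℕ → α))
    (hL : IsOmegaRegular L) (hL' : IsOmegaRegular L') :
    L = L' ↔ UP L = UP L' := by
  refine ⟨fun h => h ▸ rfl, fun h => ?_⟩
  obtain ⟨B, rfl⟩ := hL
  obtain ⟨B', rfl⟩ := hL'
  exact (NBA.lang_subset_of_UP_subset h.le).antisymm (NBA.lang_subset_of_UP_subset h.ge)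

/-- Two ω-regular languages are equal iff they contain the same
ultimately periodic words. -/
theorem stmt_0 {α : Type} [Fintype α] [Inhabited α] (L L' : Set (ℕ → α))
    (hL : IsOmegaRegular L) (hL' : IsOmegaRegular L') :
    L = L' ↔ UP L = UP L' :=
  stmt_0_general L L' hL hL'
end

section
/- Let L = ⋃_{n≥0} {a,b}* · (a b^n)^ω over the alphabet Σ = {a,b}. Then the right congruence ≈_P^ε (defined by x ≈_P^ε y iff for all v ∈ Σ*, ((xv)^ω ∈ L ⟺ (yv)^ω ∈ L)) has infinite index; in particular, for all k ≠ j with k, j ≥ 1, a b^k and a b^j are not ≈_P^ε-equivalent. Consequently L is not ω-regular. -/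
/-- The right congruence `∼_L` of an ω-language `L`. -/
def simRel {α : Type} (L : Set (ℕ → α)) (x y : List α) : Prop :=
  ∀ w : ℕ → α, prependW x w ∈ L ↔ prependW y w ∈ L

/-- The periodic progress congruence `≈_P^u`. -/
def approxP {α : Type} [Inhabited α] (L : Set (ℕ → α)) (u x y : List α) : Prop :=
  ∀ v : List α, upw u (x ++ v) ∈ L ↔ upw u (y ++ v) ∈ L

/-- The word `a b^n`, with `a = true`, `b = false`. -/
def abWord (n : ℕ) : List Bool := true :: List.replicate n false

/-- The ω-language `⋃_{n ≥ 0} {a,b}* · (a b^n)^ω`. -/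
def Lab : Set (ℕ → Bool) :=
  { w | ∃ (u : List Bool) (n : ℕ), w = upw u (abWord n) }


lemma prependW_nil {α : Type} (w : ℕ → α) : prependW ([] : List α) w = w := by
  funext i; simp [prependW]

lemma length_abWord (n : ℕ) : (abWord n).length = n + 1 := by simp [abWord]

lemma getD_replicate_false (n m : ℕ) : (List.replicate n false).getD m default = false := by
  induction n generalizing m with
  | zero => simp
  | succ n ih =>
    cases m with
    | zero => simp [List.replicate]
    | succ m => simpa [List.replicate] using ih m

lemma getD_abWord (n m : ℕ) : (abWord n).getD m default = decide (m = 0) := by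
  cases m with
  | zero => simp [abWord]
  | succ m => simp [abWord, getD_replicate_false]

lemma periodW_abWord (n i : ℕ) : periodW (abWord n) i = decide (i % (n+1) = 0) := by
  unfold periodW
  rw [length_abWord, getD_abWord]

lemma periodW_abab (k j i : ℕ) :
    periodW (abWord k ++ abWord j) i = decide (i % (k+j+2) = 0 ∨ i % (k+j+2) = k+1) := by
  unfold periodW
  have hlen : (abWord k ++ abWord j).length = k + j + 2 := by
    rw [List.length_append, length_abWord, length_abWord]; omega
  rw [hlen]
  have hmlt : i % (k+j+2) < k+j+2 := Nat.mod_lt _ (by omega)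
  by_cases hc : i % (k+j+2) < k + 1
  · rw [List.getD_append _ _ _ _ (by rw [length_abWord]; exact hc), getD_abWord]
    simp only [decide_eq_decide]
    omega
  · rw [List.getD_append_right _ _ _ _ (by rw [length_abWord]; omega), length_abWord,
      getD_abWord]
    simp only [decide_eq_decide]
    omega

lemma upw_tail (u : List Bool) (n i : ℕ) (h : u.length ≤ i) :
    upw u (abWord n) i = decide ((i - u.length) % (n+1) = 0) := by
  unfold upw prependW
  rw [dif_neg (by omega)]
  exact periodW_abWord n _

lemma not_mem_Lab_of_two_gaps (w : ℕ → Bool) (g1 g2 : ℕ) (hne : g1 ≠ g2)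
    (H : ∀ T : ℕ, ∃ Q, T ≤ Q ∧ w Q = true ∧
      (∀ i, 1 ≤ i → i ≤ g1 → w (Q + i) = false) ∧
      w (Q + g1 + 1) = true ∧
      (∀ i, 1 ≤ i → i ≤ g2 → w (Q + g1 + 1 + i) = false) ∧
      w (Q + g1 + 1 + g2 + 1) = true) :
    w ∉ Lab := by
  rintro ⟨u, n, hw⟩
  subst hw
  obtain ⟨Q, hQ, h0, hb1, h1, hb2, h2⟩ := H u.length
  have e0 : (n+1) ∣ (Q - u.length) := by
    rw [upw_tail _ _ _ hQ] at h0
    exact Nat.dvd_of_mod_eq_zero (of_decide_eq_true h0)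
  have e1 : (n+1) ∣ (g1 + 1) := by
    rw [upw_tail _ _ _ (by omega)] at h1
    have hd : (n+1) ∣ (Q + g1 + 1 - u.length) :=
      Nat.dvd_of_mod_eq_zero (of_decide_eq_true h1)
    rw [show Q + g1 + 1 - u.length = (Q - u.length) + (g1 + 1) from by omega] at hd
    exact (Nat.dvd_add_right e0).mp hd
  have hng1 : n + 1 ≤ g1 + 1 := Nat.le_of_dvd (by omega) e1
  have hn : n = g1 := by
    by_contra hlt
    have hfalse := hb1 (n+1) (by omega) (by omega)
    rw [upw_tail _ _ _ (by omega)] at hfalse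
    obtain ⟨q, hq⟩ := e0
    rw [show Q + (n+1) - u.length = (n+1) * q + (n+1) * 1 from by omega, ← Nat.mul_add,
      Nat.mul_mod_right] at hfalse
    simp at hfalse
  subst hn
  have e2 : (n+1) ∣ (g2+1) := by
    rw [upw_tail _ _ _ (by omega)] at h2
    have hd : (n+1) ∣ (Q + n + 1 + g2 + 1 - u.length) :=
      Nat.dvd_of_mod_eq_zero (of_decide_eq_true h2)
    rw [show Q + n + 1 + g2 + 1 - u.length = ((Q - u.length) + (n+1)) + (g2+1) from by omega]
      at hd
    exact (Nat.dvd_add_right (Nat.dvd_add e0 dvd_rfl)).mp hd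
  have hg12 : n < g2 := by
    have := Nat.le_of_dvd (by omega) e2
    omega
  have hfalse := hb2 (n+1) (by omega) (by omega)
  rw [upw_tail _ _ _ (by omega)] at hfalse
  obtain ⟨q, hq⟩ := e0
  rw [show Q + n + 1 + (n+1) - u.length = (n+1) * q + (n+1) * 2 from by omega, ← Nat.mul_add,
    Nat.mul_mod_right] at hfalse
  simp at hfalse

lemma approx_ne (k j : ℕ) (hne : k ≠ j) : ¬ approxP Lab [] (abWord k) (abWord j) := by
  intro h
  have heq : upw [] (abWord j ++ abWord j) = upw [] (abWord j) := by
    funext i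
    unfold upw
    rw [prependW_nil, prependW_nil, periodW_abab, periodW_abWord]
    simp only [decide_eq_decide]
    have hdvd : (j+1) ∣ (j+j+2) := ⟨2, by omega⟩
    have h2 : (i % (j+j+2)) % (j+1) = i % (j+1) := Nat.mod_mod_of_dvd i hdvd
    have hr : i % (j+j+2) < j+j+2 := Nat.mod_lt _ (by omega)
    rcases Nat.lt_or_ge (i % (j+j+2)) (j+1) with hlt | hge
    · rw [← h2, Nat.mod_eq_of_lt hlt]; omega
    · rw [← h2, Nat.mod_eq_sub_mod hge,
        Nat.mod_eq_of_lt (show i % (j+j+2) - (j+1) < j+1 by omega)]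
      omega
  have hmem : upw [] (abWord j ++ abWord j) ∈ Lab := ⟨[], j, heq⟩
  have hmemK : upw [] (abWord k ++ abWord j) ∈ Lab := (h (abWord j)).mpr hmem
  have hv : ∀ T x : ℕ, upw [] (abWord k ++ abWord j) ((k+j+2)*T + x) =
      decide (x % (k+j+2) = 0 ∨ x % (k+j+2) = k+1) := by
    intro T x
    unfold upw
    rw [prependW_nil, periodW_abab, Nat.mul_add_mod]
  refine not_mem_Lab_of_two_gaps _ k j hne (fun T => ⟨(k+j+2)*T, ?_, ?_, ?_, ?_, ?_, ?_⟩) hmemK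
  · exact Nat.le_mul_of_pos_left T (by omega)
  · have h0 := hv T 0
    rw [Nat.add_zero] at h0
    rw [h0]; simp
  · intro i h1i h2i
    rw [hv T i, Nat.mod_eq_of_lt (by omega)]
    simp only [decide_eq_false_iff_not]
    omega
  · rw [show (k+j+2)*T + k + 1 = (k+j+2)*T + (k+1) from by omega, hv T (k+1),
      Nat.mod_eq_of_lt (by omega)]
    simp
  · intro i h1i h2i
    rw [show (k+j+2)*T + k + 1 + i = (k+j+2)*T + (k+1+i) from by omega, hv T (k+1+i),
      Nat.mod_eq_of_lt (by omega)]
    simp only [decide_eq_false_iff_not]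
    omega
  · rw [show (k+j+2)*T + k + 1 + j + 1 = (k+j+2)*T + (k+j+2) from by omega, hv T (k+j+2),
      Nat.mod_self]
    simp

lemma part2 : ¬ ∃ R : Finset (List Bool), ∀ x : List Bool, ∃ y ∈ R, approxP Lab [] x y := by
  rintro ⟨R, hR⟩
  choose f hf1 hf2 using fun k : ℕ => hR (abWord (k+1))
  obtain ⟨k, j, hkj, hfeq⟩ := Finite.exists_ne_map_eq_of_infinite
    (fun k : ℕ => (⟨f k, hf1 k⟩ : {x // x ∈ R}))
  have hfeq' : f k = f j := congrArg Subtype.val hfeq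
  apply approx_ne (k+1) (j+1) (by omega)
  intro v
  exact (hf2 k v).trans (by rw [hfeq']; exact (hf2 j v).symm)

/-- Loop run segment obtained by duplicating the segment `[a1, a2]` of `r`. -/
def loopR' {σ : Type} (r : ℕ → σ) (A K a1 : ℕ) (t : ℕ) : σ :=
  if t < K then r (A + t) else r (a1 + (t - K))

/-- Loop word segment obtained by duplicating `d` letters. -/
def loopWd (w : ℕ → Bool) (A K d : ℕ) (t : ℕ) : Bool :=
  if t < K then w (A + t) else w (A + (t - d))

/-- Glue a prefix of `g` with the infinitely repeated loop. -/
def glue {β : Type} (g : ℕ → β) (A Len : ℕ) (loop : ℕ → β) (i : ℕ) : β :=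
  if i < A then g i else loop ((i - A) % Len)

lemma glue_at {β : Type} (g : ℕ → β) (A Len : ℕ) (loop : ℕ → β) (j t : ℕ)
    (hL : t < Len) : glue g A Len loop (A + (Len * j + t)) = loop t := by
  unfold glue
  rw [if_neg (by omega), show A + (Len * j + t) - A = Len * j + t from by omega,
    Nat.mul_add_mod, Nat.mod_eq_of_lt hL]

lemma part3 : ¬ IsOmegaRegular Lab := by
  rintro ⟨B, hB⟩
  haveI : Fintype B.σ := B.fin
  set N := Fintype.card B.σ with hN
  set P := N + 1 with hP
  have hwmem : upw [] (abWord N) ∈ Lab := ⟨[], N, rfl⟩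
  rw [← hB] at hwmem
  obtain ⟨r, hstart, hstep, hacc⟩ := hwmem
  have hwv : ∀ i, upw [] (abWord N) i = decide (i % P = 0) := by
    intro i
    unfold upw
    rw [prependW_nil]
    exact periodW_abWord N i
  have hNpos : 0 < N := by rw [hN]; exact Fintype.card_pos_iff.mpr ⟨r 0⟩
  -- first pigeonhole: a state `p` occurring at infinitely many block boundaries
  obtain ⟨p, hpfib⟩ := Finite.exists_infinite_fiber (fun i : ℕ => r (P * i))
  have hpinf : ((fun i : ℕ => r (P * i)) ⁻¹' {p}).Infinite := Set.infinite_coe_iff.mp hpfib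
  obtain ⟨i0, hi0mem, hi0pos⟩ := hpinf.exists_gt 0
  obtain ⟨m, hmge, hmacc⟩ := hacc (P * i0)
  obtain ⟨i1, hi1mem, hi1gt⟩ := hpinf.exists_gt (max m (i0 + 1))
  have hi0 : r (P * i0) = p := hi0mem
  have hi1 : r (P * i1) = p := hi1mem
  have hmlt : m < i1 := lt_of_le_of_lt (le_max_left _ _) hi1gt
  have hi01 : i0 + 2 ≤ i1 := by
    have := lt_of_le_of_lt (le_max_right _ _) hi1gt
    omega
  set A := P * i0 with hA
  set Bnd := P * i1 with hBnd
  have hmBnd : m < Bnd := by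
    have : i1 ≤ P * i1 := Nat.le_mul_of_pos_left i1 (by omega)
    omega
  -- second pigeonhole: a repeated state inside the first b-block after `A`
  obtain ⟨t1, t2, ht12, hteq⟩ :=
    Fintype.exists_ne_map_eq_of_card_lt (fun t : Fin (N+1) => r (A + 1 + (t : ℕ)))
      (by simp [hN])
  obtain ⟨a1, a2, ha1, ha12, ha2, hloop⟩ :
      ∃ a1 a2, A < a1 ∧ a1 < a2 ∧ a2 ≤ A + P ∧ r a1 = r a2 := by
    rcases Nat.lt_or_ge (t1 : ℕ) (t2 : ℕ) with hlt | hge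
    · exact ⟨A + 1 + (t1 : ℕ), A + 1 + (t2 : ℕ), by omega,
        by omega, by have := t2.isLt; omega, hteq⟩
    · have hlt : (t2 : ℕ) < (t1 : ℕ) := by
        rcases Nat.lt_or_ge (t2 : ℕ) (t1 : ℕ) with h | h
        · exact h
        · exact absurd (Fin.ext (by omega)) ht12
      exact ⟨A + 1 + (t2 : ℕ), A + 1 + (t1 : ℕ), by omega,
        by omega, by have := t1.isLt; omega, hteq.symm⟩
  set d := a2 - a1 with hd
  set K := a2 - A with hK
  obtain ⟨c, hc2, hcBnd⟩ : ∃ c, 2 ≤ c ∧ Bnd = A + P * c := by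
    refine ⟨i1 - i0, by omega, ?_⟩
    have h := Nat.mul_add P i0 (i1 - i0)
    rw [show i0 + (i1 - i0) = i1 from by omega] at h
    rw [hBnd, hA]
    omega
  set Len := (Bnd - A) + d with hLen
  have hd1 : 1 ≤ d := by omega
  have hdN : d ≤ N := by omega
  have hK2 : 2 ≤ K := by omega
  have hKP : K ≤ P := by omega
  have hKd : d < K := by omega
  have hLenbig : 2 * P + d ≤ Len := by
    have : P * 2 ≤ P * c := Nat.mul_le_mul_left P hc2
    omega
  have hLenpos : 0 < Len := by omega
  have hrA : r A = p := hi0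
  have hrB : r Bnd = p := hi1
  -- the loop is a genuine run segment
  have stepL : ∀ t, t < Len →
      loopR' r A K a1 (t+1) ∈ B.step (loopR' r A K a1 t) (loopWd (upw [] (abWord N)) A K d t) := by
    intro t ht
    unfold loopR' loopWd
    by_cases h1 : t + 1 < K
    · rw [if_pos h1, if_pos (show t < K from by omega), if_pos (show t < K from by omega),
        ← Nat.add_assoc]
      exact hstep (A + t)
    · by_cases h2 : t < K
      · rw [if_neg h1, if_pos h2, if_pos h2,
          show a1 + (t + 1 - K) = a1 from by omega, hloop,
          show a2 = A + t + 1 from by omega]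
        exact hstep (A + t)
      · rw [if_neg h1, if_neg h2, if_neg h2,
          show a1 + (t + 1 - K) = (a1 + (t - K)) + 1 from by omega,
          show A + (t - d) = a1 + (t - K) from by omega]
        exact hstep (a1 + (t - K))
  have loopR0 : loopR' r A K a1 0 = p := by
    unfold loopR'
    rw [if_pos (show (0:ℕ) < K from by omega), Nat.add_zero]
    exact hrA
  have loopRLen : loopR' r A K a1 Len = p := by
    unfold loopR'
    rw [if_neg (show ¬ Len < K from by omega), show a1 + (Len - K) = Bnd from by omega]
    exact hrB
  -- the glued run witnesses acceptance of the glued word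
  have hA0 : 0 < A := by
    have : 0 < P * i0 := Nat.mul_pos (by omega) hi0pos
    omega
  have hrun : glue (upw [] (abWord N)) A Len (loopWd (upw [] (abWord N)) A K d) ∈ B.lang := by
    refine ⟨glue r A Len (loopR' r A K a1), ?_, ?_, ?_⟩
    · unfold glue
      rw [if_pos hA0]
      exact hstart
    · intro i
      by_cases h1 : i + 1 < A
      · unfold glue
        rw [if_pos h1, if_pos (show i < A from by omega), if_pos (show i < A from by omega)]
        exact hstep i
      · by_cases h2 : i + 1 = A
        · unfold glue
          rw [if_neg (show ¬ i + 1 < A from by omega), if_pos (show i < A from by omega),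
            if_pos (show i < A from by omega),
            show (i + 1 - A) % Len = 0 from by rw [show i + 1 - A = 0 from by omega]; simp,
            loopR0, ← hrA, show A = i + 1 from h2.symm]
          exact hstep i
        · have hiA : A ≤ i := by omega
          unfold glue
          rw [if_neg (show ¬ i + 1 < A from by omega), if_neg (show ¬ i < A from by omega),
            if_neg (show ¬ i < A from by omega)]
          have ht : (i - A) % Len < Len := Nat.mod_lt _ (by omega)
          have hstepLt := stepL _ ht
          have hnext : (i + 1 - A) % Len = ((i - A) % Len + 1) % Len := by
            rw [show i + 1 - A = (i - A) + 1 from by omega, Nat.add_mod,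
              Nat.mod_eq_of_lt (show 1 < Len from by omega)]
          rw [hnext]
          by_cases h3 : (i - A) % Len + 1 < Len
          · rw [Nat.mod_eq_of_lt h3]
            exact hstepLt
          · have h4 : (i - A) % Len + 1 = Len := by omega
            rw [h4, Nat.mod_self, loopR0]
            rw [h4, loopRLen] at hstepLt
            exact hstepLt
    · obtain ⟨t0, ht0len, ht0acc⟩ : ∃ t0, t0 < Len ∧ loopR' r A K a1 t0 ∈ B.accept := by
        by_cases hm2 : m < a2
        · refine ⟨m - A, by omega, ?_⟩
          unfold loopR'
          rw [if_pos (show m - A < K from by omega), show A + (m - A) = m from by omega]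
          exact hmacc
        · refine ⟨m - A + d, by omega, ?_⟩
          unfold loopR'
          rw [if_neg (show ¬ m - A + d < K from by omega),
            show a1 + (m - A + d - K) = m from by omega]
          exact hmacc
      intro n
      refine ⟨A + (Len * n + t0), ?_, ?_⟩
      · have := Nat.le_mul_of_pos_left n hLenpos
        omega
      · rw [glue_at r A Len _ n t0 ht0len]
        exact ht0acc
  -- letter values on the loop
  have hlWv : ∀ t, t < Len → loopWd (upw [] (abWord N)) A K d t =
      decide (t = 0 ∨ (P + d ≤ t ∧ (t - d) % P = 0)) := by
    intro t ht
    unfold loopWd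
    by_cases h1 : t < K
    · rw [if_pos h1, hwv, hA, Nat.mul_add_mod, Nat.mod_eq_of_lt (by omega)]
      simp only [decide_eq_decide]
      constructor
      · exact fun h => Or.inl h
      · rintro (h | ⟨h2, -⟩)
        · exact h
        · omega
    · rw [if_neg h1, hwv, hA, Nat.mul_add_mod]
      simp only [decide_eq_decide]
      constructor
      · intro h
        right
        refine ⟨?_, h⟩
        have hdv : P ∣ (t - d) := Nat.dvd_of_mod_eq_zero h
        have := Nat.le_of_dvd (by omega) hdv
        omega
      · rintro (h | ⟨-, h2⟩)
        · omega
        · exact h2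
  -- the glued word is not in Lab
  have hbad : glue (upw [] (abWord N)) A Len (loopWd (upw [] (abWord N)) A K d) ∉ Lab := by
    apply not_mem_Lab_of_two_gaps _ (N + d) N (by omega)
    intro T
    refine ⟨A + Len * T, ?_, ?_, ?_, ?_, ?_, ?_⟩
    · have := Nat.le_mul_of_pos_left T hLenpos
      omega
    · rw [show A + Len * T = A + (Len * T + 0) from by omega,
        glue_at _ _ _ _ _ _ (by omega), hlWv 0 (by omega)]
      simp
    · intro i h1i h2i
      rw [show A + Len * T + i = A + (Len * T + i) from by omega,
        glue_at _ _ _ _ _ _ (by omega), hlWv i (by omega)]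
      apply decide_eq_false
      rintro (h | ⟨h2, -⟩) <;> omega
    · rw [show A + Len * T + (N + d) + 1 = A + (Len * T + (P + d)) from by omega,
        glue_at _ _ _ _ _ _ (by omega), hlWv _ (by omega)]
      apply decide_eq_true
      right
      refine ⟨le_refl _, ?_⟩
      rw [show P + d - d = P from by omega, Nat.mod_self]
    · intro i h1i h2i
      rw [show A + Len * T + (N + d) + 1 + i = A + (Len * T + (P + d + i)) from by omega,
        glue_at _ _ _ _ _ _ (by omega), hlWv _ (by omega)]
      apply decide_eq_false
      have hmod : (P + d + i - d) % P = i := by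
        rw [show P + d + i - d = P + i from by omega, Nat.add_mod_left,
          Nat.mod_eq_of_lt (by omega)]
      rintro (h | ⟨-, h2⟩)
      · omega
      · rw [hmod] at h2
        omega
    · rw [show A + Len * T + (N + d) + 1 + N + 1 = A + (Len * T + (2 * P + d)) from by omega]
      by_cases hc2' : 2 * P + d < Len
      · rw [glue_at _ _ _ _ _ _ hc2', hlWv _ hc2']
        apply decide_eq_true
        right
        refine ⟨by omega, ?_⟩
        rw [show 2 * P + d - d = 2 * P from by omega]
        exact Nat.mul_mod_left 2 P
      · have hEq : 2 * P + d = Len := by omega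
        rw [hEq, show A + (Len * T + Len) = A + (Len * (T + 1) + 0) from by rw [Nat.mul_succ]; omega,
          glue_at _ _ _ _ _ _ (by omega), hlWv 0 (by omega)]
        simp
  rw [hB] at hrun
  exact hbad hrun

/-- The congruence `≈_P^ε` of `Lab` has infinite index (witnessed by the
pairwise inequivalent words `a b^k`), hence `Lab` is not ω-regular. -/
theorem stmt_3 :
    (∀ k j : ℕ, 1 ≤ k → 1 ≤ j → k ≠ j → ¬ approxP Lab [] (abWord k) (abWord j)) ∧
    (¬ ∃ R : Finset (List Bool), ∀ x : List Bool, ∃ y ∈ R, approxP Lab [] x y) ∧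
    ¬ IsOmegaRegular Lab :=
  ⟨fun k j _ _ hne => approx_ne k j hne, part2, part3⟩
end

section
/- Let w be an ultimately periodic ω-word with two decompositions (u, v) and (x, y), i.e., w = u v^ω = x y^ω with v, y nonempty. Let r be the smallest period of (u, v) and t the smallest period of (x, y). Then |r| = |t|, and either r = t or there exists j with 2 ≤ j ≤ |t| such that r = t[j..|t|] · t[1..j−1] (r is a cyclic rotation of t). -/
/-- `r` is the smallest period of a decomposition with period word `v`. -/
def IsSmallestPeriod {α : Type} [Inhabited α] (r v : List α) : Prop :=
  r ≠ [] ∧ r <+: v ∧ periodW r = periodW v ∧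
    ∀ t : List α, t ≠ [] → t <+: r → t ≠ r → periodW t ≠ periodW r

open Function

theorem Function.Periodic.nat_mod {β : Type*} {f : ℕ → β} {m n : ℕ} (hm : Periodic f m)
    (hn : Periodic f n) : Periodic f (n % m) := fun k => by
  calc f (k + n % m) = f (k + n % m + n / m * m) := (hm.nat_mul _ _).symm
    _ = f (k + n) := by rw [add_assoc, Nat.mod_add_div']
    _ = f k := hn k

theorem Function.Periodic.nat_gcd {β : Type*} {f : ℕ → β} {m n : ℕ} (hm : Periodic f m)
    (hn : Periodic f n) : Periodic f (Nat.gcd m n) := by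
  induction m, n using Nat.gcd.induction with
  | H0 n => simpa using hn
  | H1 m n _ ih => rw [Nat.gcd_rec]; exact ih (hm.nat_mod hn) hm

theorem Function.Periodic.eq_shift_of_shift_eq {β : Type*} {f g : ℕ → β} {p a b : ℕ}
    (hf : Periodic f p) (hp : 0 < p) (h : ∀ n, f (n + a) = g (n + b)) (n : ℕ) :
    f n = g (n + (a * (p - 1) + b)) := by
  calc f n = f (n + a * (p - 1) + a) := by
        -- `a * (p - 1) + a = a * p` is a period of `f`
        rw [add_assoc, ← Nat.mul_add_one, Nat.sub_one_add_one_eq_of_pos hp]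
        exact (hf.nat_mul a n).symm
    _ = g (n + (a * (p - 1) + b)) := by rw [h, add_assoc]

theorem Function.Periodic.of_shift_eq {β : Type*} {f g : ℕ → β} {p q a b : ℕ}
    (hf : Periodic f p) (hp : 0 < p) (hg : Periodic g q) (h : ∀ n, f (n + a) = g (n + b)) :
    Periodic f q := fun n => by
  rw [hf.eq_shift_of_shift_eq hp h, hf.eq_shift_of_shift_eq hp h n, add_right_comm, hg]

section periodW

variable {α : Type} [Inhabited α]

theorem periodW_periodic (v : List α) : Periodic (periodW v) v.length := fun n => by
  simp [periodW]

theorem periodW_eq_getElem {v : List α} {n : ℕ} (hn : n < v.length) : periodW v n = v[n] := by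
  simp [periodW, Nat.mod_eq_of_lt hn, hn]

theorem periodW_take_of_periodic {r : List α} {d : ℕ} (hd : 0 < d) (hdr : d ≤ r.length)
    (h : Periodic (periodW r) d) : periodW (r.take d) = periodW r := by
  funext n
  have hnd : n % d < d := Nat.mod_lt n hd
  rw [← h.map_mod_nat, ← (periodW_periodic _).map_mod_nat, List.length_take_of_le hdr,
    periodW_eq_getElem (by simpa [hdr] using hnd), periodW_eq_getElem (by omega), List.getElem_take]

theorem periodW_rotate (t : List α) (k n : ℕ) : periodW (t.rotate k) n = periodW t (n + k) := by
  rcases eq_or_ne t [] with rfl | ht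
  · simp [periodW]
  have hL : 0 < t.length := List.length_pos_iff.mpr ht
  rw [← (periodW_periodic _).map_mod_nat, ← (periodW_periodic t).map_mod_nat, List.length_rotate,
    periodW_eq_getElem (by simpa using Nat.mod_lt n hL), periodW_eq_getElem (Nat.mod_lt _ hL),
    List.getElem_rotate]
  simp only [Nat.mod_add_mod]

theorem eq_of_periodW_eq {r s : List α} (hlen : r.length = s.length)
    (h : periodW r = periodW s) : r = s :=
  List.ext_getElem hlen fun n hr hs => by
    rw [← periodW_eq_getElem hr, ← periodW_eq_getElem hs, h]

theorem IsSmallestPeriod.length_dvd {r v : List α} (hr : IsSmallestPeriod r v) {p : ℕ}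
    (hp : Periodic (periodW r) p) : r.length ∣ p := by
  obtain ⟨hr0, -, -, hmin⟩ := hr
  have hP : 0 < r.length := List.length_pos_iff.mpr hr0
  set d := Nat.gcd p r.length
  have hd : 0 < d := Nat.gcd_pos_of_pos_right p hP
  have hdr : d ≤ r.length := Nat.le_of_dvd hP (Nat.gcd_dvd_right _ _)
  have htake : r.take d = r := by
    by_contra hne
    refine hmin (r.take d) (by simp [hd.ne', hr0]) (List.take_prefix _ _) hne ?_
    exact periodW_take_of_periodic hd hdr (hp.nat_gcd (periodW_periodic r))
  have hd_eq : d = r.length := by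
    simpa [List.length_take_of_le hdr] using congrArg List.length htake
  exact hd_eq ▸ Nat.gcd_dvd_left p r.length

theorem upw_length_add (u v : List α) (n : ℕ) : upw u v (u.length + n) = periodW v n := by
  simp [upw, prependW]

end periodW

theorem List.rotate_eq_self_or_eq_drop_append_take {α : Type*} (t : List α) (k : ℕ) :
    t.rotate k = t ∨ ∃ j : ℕ, 2 ≤ j ∧ j ≤ t.length ∧
      t.rotate k = t.drop (j - 1) ++ t.take (j - 1) := by
  rcases eq_or_ne t [] with rfl | ht
  · simp
  rcases Nat.eq_zero_or_pos (k % t.length) with hk | hk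
  · left; simp [List.rotate_eq_drop_append_take_mod, hk]
  · have : k % t.length < t.length := Nat.mod_lt _ (List.length_pos_iff.mpr ht)
    right
    exact ⟨k % t.length + 1, by omega, by omega, by simpa using List.rotate_eq_drop_append_take_mod⟩

theorem stmt_6_general {α : Type} [Inhabited α] (u v x y r t : List α)
    (hw : upw u v = upw x y)
    (hr : IsSmallestPeriod r v) (ht : IsSmallestPeriod t y) :
    r.length = t.length ∧
      (r = t ∨ ∃ j : ℕ, 2 ≤ j ∧ j ≤ t.length ∧
        r = t.drop (j - 1) ++ t.take (j - 1)) := by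
  have ⟨hr0, _, hrv, _⟩ := hr
  have ⟨ht0, _, hty, _⟩ := ht
  have hP : 0 < r.length := List.length_pos_iff.mpr hr0
  have hQ : 0 < t.length := List.length_pos_iff.mpr ht0
  have hshift (n : ℕ) : periodW r (n + x.length) = periodW t (n + u.length) := by
    rw [hrv, hty, ← upw_length_add u, ← upw_length_add x, hw]
    congr 1
    omega
  have hlen : r.length = t.length := Nat.dvd_antisymm
    (hr.length_dvd ((periodW_periodic r).of_shift_eq hP (periodW_periodic t) hshift))
    (ht.length_dvd ((periodW_periodic t).of_shift_eq hQ (periodW_periodic r) (hshift · |>.symm)))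
  have hrot : r = t.rotate (x.length * (r.length - 1) + u.length) := by
    refine eq_of_periodW_eq (by simp [hlen]) (funext fun n => ?_)
    rw [periodW_rotate, (periodW_periodic r).eq_shift_of_shift_eq hP hshift]
  exact ⟨hlen, hrot ▸ t.rotate_eq_self_or_eq_drop_append_take _⟩

/-- Smallest periods of two decompositions of the same ω-word have the same
length and are cyclic rotations of each other. -/
theorem stmt_6 {α : Type} [Inhabited α] (u v x y r t : List α)
    (hv : v ≠ []) (hy : y ≠ [])
    (hw : upw u v = upw x y)
    (hr : IsSmallestPeriod r v) (ht : IsSmallestPeriod t y) :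
    r.length = t.length ∧
      (r = t ∨ ∃ j : ℕ, 2 ≤ j ∧ j ≤ t.length ∧
        r = t.drop (j - 1) ++ t.take (j - 1)) :=
  stmt_6_general u v x y r t hw hr ht
end

section
/- If two decompositions (u₁, v₁) and (u₂, v₂) of the same ω-word u v^ω have the same smallest period y, then they have the same shortest form (x, y); in particular u₁ = x y^i and u₂ = x y^j for some i, j ≥ 0. -/
set_option linter.unusedSectionVars false
set_option linter.unusedVariables false


section Lemmas
variable {α : Type} [Inhabited α]

def HasP (w : ℕ → α) (p : ℕ) : Prop := ∀ i, w (i + p) = w i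

lemma hasP_mul {w : ℕ → α} {p : ℕ} (h : HasP w p) (k i : ℕ) : w (i + p * k) = w i := by
  induction k with
  | zero => simp
  | succ n ih =>
      have : i + p * (n+1) = (i + p * n) + p := by ring
      rw [this, h, ih]

lemma hasP_mod {w : ℕ → α} {p q : ℕ} (hp : HasP w p) (hq : HasP w q) : HasP w (q % p) := by
  intro i
  have h1 : w (i + q % p + p * (q / p)) = w (i + q % p) := hasP_mul hp _ _
  have h2 : i + q % p + p * (q / p) = i + q := by
    rw [Nat.add_assoc, Nat.mod_add_div]
  rw [← h1, h2, hq]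

lemma hasP_gcd {w : ℕ → α} {p q : ℕ} (hp : HasP w p) (hq : HasP w q) : HasP w (Nat.gcd p q) := by
  induction p, q using Nat.gcd.induction with
  | H0 n => simpa using hq
  | H1 m n hm ih =>
      rw [Nat.gcd_rec]
      exact ih (hasP_mod hp hq) hp
  -- note: need hyps inside induction; restructure below if fails

lemma hasP_reduce {w : ℕ → α} {p : ℕ} (h : HasP w p) (hp : 0 < p) (i : ℕ) :
    w i = w (i % p) := by
  conv_lhs => rw [← Nat.mod_add_div i p]
  exact hasP_mul h _ _

lemma periodW_hasP (v : List α) : HasP (periodW v) v.length := by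
  intro i; simp [periodW, Nat.add_mod_right]

lemma upw_lt {u v : List α} {i : ℕ} (h : i < u.length) : upw u v i = u[i] := by
  simp [upw, prependW, h]

lemma upw_ge (u v : List α) (i : ℕ) : upw u v (u.length + i) = periodW v i := by
  simp [upw, prependW]

lemma rep_length (v : List α) (k : ℕ) : (rep v k).length = k * v.length := by simp [rep]

lemma rep_succ (v : List α) (k : ℕ) : rep v (k+1) = v ++ rep v k := by
  simp [rep, List.replicate_succ]

lemma rep_succ' (v : List α) (k : ℕ) : rep v (k+1) = rep v k ++ v := by
  simp [rep, List.replicate_succ']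

lemma rep_getD {y : List α} {k i : ℕ} (h : i < k * y.length) :
    (rep y k).getD i default = y.getD (i % y.length) default := by
  induction k generalizing i with
  | zero => omega
  | succ n ih =>
      have hlen : (n+1) * y.length = y.length + n * y.length := by ring
      rw [hlen] at h
      rw [rep_succ]
      rcases lt_or_ge i y.length with hi | hi
      · rw [List.getD_append _ _ _ _ hi, Nat.mod_eq_of_lt hi]
      · have hy : 0 < y.length := by
          rcases Nat.eq_zero_or_pos y.length with h0 | h0
          · rw [h0] at h; simp at h
          · exact h0
        rw [List.getD_append_right _ _ _ _ hi]
        rw [ih (by omega)]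
        congr 1
        rw [Nat.mod_eq_sub_mod hi]

lemma smallest_dvd {y : List α} (hy : y ≠ [])
    (hmin : ∀ t : List α, t ≠ [] → t <+: y → t ≠ y → periodW t ≠ periodW y)
    {d : ℕ} (hd : HasP (periodW y) d) : y.length ∣ d := by
  set g := Nat.gcd y.length d with hg
  have hylen : 0 < y.length := List.length_pos_iff.mpr hy
  have hgpos : 0 < g := Nat.gcd_pos_of_pos_left _ hylen
  have hgdvd : g ∣ y.length := Nat.gcd_dvd_left _ _
  have hgle : g ≤ y.length := Nat.le_of_dvd hylen hgdvd
  have hPg : HasP (periodW y) g := hasP_gcd (periodW_hasP y) hd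
  set t := y.take g with ht
  have htlen : t.length = g := by simp [ht]; omega
  have htpre : t <+: y := List.take_prefix _ _
  have htne : t ≠ [] := by
    intro h0; rw [h0] at htlen; simp at htlen; omega
  have hpt : periodW t = periodW y := by
    funext i
    have h1 : i % g < g := Nat.mod_lt _ hgpos
    have e1 : periodW t i = t.getD (i % g) default := by simp [periodW, htlen]
    have e2 : t.getD (i % g) default = y.getD (i % g) default := by
      rw [List.getD_eq_getElem _ _ (by omega : i % g < t.length),
          List.getD_eq_getElem _ _ (by omega : i % g < y.length)]
      exact List.getElem_take ..
    have e3 : y.getD (i % g) default = periodW y (i % g) := by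
      simp [periodW, Nat.mod_eq_of_lt (lt_of_lt_of_le h1 hgle)]
    rw [e1, e2, e3, ← hasP_reduce hPg hgpos]
  by_cases hteq : t = y
  · have hgy : g = y.length := by rw [← htlen, hteq]
    have := Nat.gcd_dvd_right y.length d
    rwa [← hg, hgy] at this
  · exact absurd hpt (hmin t htne htpre hteq)

lemma eq_rep_of_periodW_eq {y v : List α} (hv : v ≠ []) (hy : y ≠ [])
    (hmin : ∀ t : List α, t ≠ [] → t <+: y → t ≠ y → periodW t ≠ periodW y)
    (hp : periodW y = periodW v) : ∃ k, 1 ≤ k ∧ v = rep y k := by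
  have hvlen : 0 < v.length := List.length_pos_iff.mpr hv
  have hylen : 0 < y.length := List.length_pos_iff.mpr hy
  have hd : HasP (periodW y) v.length := by rw [hp]; exact periodW_hasP v
  have hdvd : y.length ∣ v.length := smallest_dvd hy hmin hd
  refine ⟨v.length / y.length, ?_, ?_⟩
  · have := Nat.div_mul_cancel hdvd
    rcases Nat.eq_zero_or_pos (v.length / y.length) with h0 | h0
    · rw [h0] at this; omega
    · omega
  · have hlen : (rep y (v.length / y.length)).length = v.length := by
      rw [rep_length, Nat.div_mul_cancel hdvd]
    apply List.ext_getElem hlen.symm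
    intro i h1 h2
    have h3 : i < (v.length / y.length) * y.length := by rw [Nat.div_mul_cancel hdvd]; omega
    have e1 : v[i] = periodW v i := by
      show v[i] = v.getD (i % v.length) default
      rw [Nat.mod_eq_of_lt h1, List.getD_eq_getElem _ _ h1]
    have e2 : (rep y (v.length / y.length))[i] = y.getD (i % y.length) default := by
      rw [← List.getD_eq_getElem _ _ h2, rep_getD h3]
    rw [e1, ← hp, e2]
    simp [periodW]

lemma upw_congr {u v v' : List α} (h : periodW v = periodW v') : upw u v = upw u v' := by
  simp [upw, h]

lemma upw_append_y (b y : List α) (hy : y ≠ []) : upw (b ++ y) y = upw b y := by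
  have hylen : 0 < y.length := List.length_pos_iff.mpr hy
  funext i
  by_cases h1 : i < b.length
  · rw [upw_lt (by simp; omega), upw_lt h1]
    exact List.getElem_append_left h1
  · by_cases h2 : i < b.length + y.length
    · have e0 : i = b.length + (i - b.length) := by omega
      rw [upw_lt (by simp; omega)]
      conv_rhs => rw [e0, upw_ge]
      rw [List.getElem_append_right (by omega)]
      have : periodW y (i - b.length) = y.getD (i - b.length) default := by
        simp [periodW, Nat.mod_eq_of_lt (by omega : i - b.length < y.length)]
      rw [this, List.getD_eq_getElem _ _ (by omega)]
    · have e1 : i = (b ++ y).length + (i - b.length - y.length) := by simp; omega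
      have e2 : i = b.length + ((i - b.length - y.length) + y.length) := by omega
      conv_lhs => rw [e1, upw_ge]
      conv_rhs => rw [e2, upw_ge]
      rw [periodW_hasP y]

lemma upw_append_rep (a y : List α) (hy : y ≠ []) (k : ℕ) :
    upw (a ++ rep y k) y = upw a y := by
  induction k with
  | zero => simp [rep]
  | succ n ih => rw [rep_succ', ← List.append_assoc, upw_append_y _ _ hy, ih]

lemma upw_shift {a b y : List α} (hy : y ≠ [])
    (hmin : ∀ t : List α, t ≠ [] → t <+: y → t ≠ y → periodW t ≠ periodW y)
    (h : upw a y = upw b y) (hle : a.length ≤ b.length) :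
    ∃ m, b = a ++ rep y m := by
  have hylen : 0 < y.length := List.length_pos_iff.mpr hy
  set d := b.length - a.length with hdd
  have hd : HasP (periodW y) d := by
    intro i
    have e1 : periodW y (i + d) = upw a y (a.length + (i + d)) := (upw_ge a y (i + d)).symm
    have e2 : a.length + (i + d) = b.length + i := by omega
    rw [e1, e2, h, upw_ge]
  have hdvd : y.length ∣ d := smallest_dvd hy hmin hd
  refine ⟨d / y.length, ?_⟩
  have hlen : (a ++ rep y (d / y.length)).length = b.length := by
    simp [rep_length, Nat.div_mul_cancel hdvd]; omega
  apply List.ext_getElem hlen.symm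
  intro i h1 h2
  have hb : b[i] = upw a y i := by rw [h, upw_lt h1]
  by_cases hia : i < a.length
  · rw [hb, upw_lt hia, List.getElem_append_left hia]
  · have e0 : i = a.length + (i - a.length) := by omega
    have h3 : i - a.length < (d / y.length) * y.length := by
      rw [Nat.div_mul_cancel hdvd]; omega
    rw [hb]
    conv_lhs => rw [e0, upw_ge]
    rw [List.getElem_append_right (by omega), ← List.getD_eq_getElem _ _ (by rw [rep_length]; exact h3),
        rep_getD h3]
    simp [periodW]

lemma strip (y : List α) (hy : y ≠ []) :
    ∀ u : List α, ∃ x i, u = x ++ rep y i ∧ ∀ x' : List α, x ≠ x' ++ y := by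
  suffices H : ∀ n (u : List α), u.length = n →
      ∃ x i, u = x ++ rep y i ∧ ∀ x' : List α, x ≠ x' ++ y by
    exact fun u => H u.length u rfl
  intro n
  induction n using Nat.strong_induction_on with
  | _ n ih =>
    intro u hu
    by_cases hx : ∃ x', u = x' ++ y
    · obtain ⟨x', rfl⟩ := hx
      have hylen : 0 < y.length := List.length_pos_iff.mpr hy
      have hlt : x'.length < n := by subst hu; simp; omega
      obtain ⟨x, i, hx1, hx2⟩ := ih x'.length hlt x' rfl
      exact ⟨x, i + 1, by rw [hx1, rep_succ', ← List.append_assoc], hx2⟩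
    · push_neg at hx
      exact ⟨u, 0, by simp [rep], hx⟩

end Lemmas

/-- Two decompositions of the same ω-word sharing the same smallest period `y`
have the same shortest form `(x, y)`; in particular `u₁ = x y^i`, `u₂ = x y^j`. -/
theorem stmt_8 {α : Type} [Inhabited α] (u₁ v₁ u₂ v₂ y : List α)
    (hv₁ : v₁ ≠ []) (hv₂ : v₂ ≠ [])
    (hw : upw u₁ v₁ = upw u₂ v₂)
    (h₁ : IsSmallestPeriod y v₁) (h₂ : IsSmallestPeriod y v₂) :
    ∃ x : List α, (∀ x' : List α, x ≠ x' ++ y) ∧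
      ∃ (i j j₁ j₂ : ℕ), 1 ≤ j₁ ∧ 1 ≤ j₂ ∧
        u₁ = x ++ rep y i ∧ v₁ = rep y j₁ ∧
        u₂ = x ++ rep y j ∧ v₂ = rep y j₂ := by
  obtain ⟨hy, hpre₁, hp₁, hmin⟩ := h₁
  obtain ⟨-, hpre₂, hp₂, -⟩ := h₂
  obtain ⟨j₁, hj₁, hv₁e⟩ := eq_rep_of_periodW_eq hv₁ hy hmin hp₁
  obtain ⟨j₂, hj₂, hv₂e⟩ := eq_rep_of_periodW_eq hv₂ hy hmin hp₂
  have hw' : upw u₁ y = upw u₂ y := by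
    rw [upw_congr hp₁, hw, upw_congr hp₂]
  obtain ⟨x₁, i₁, hu₁e, hf₁⟩ := strip y hy u₁
  obtain ⟨x₂, i₂, hu₂e, hf₂⟩ := strip y hy u₂
  have hww : upw x₁ y = upw x₂ y := by
    rw [← upw_append_rep x₁ y hy i₁, ← upw_append_rep x₂ y hy i₂, ← hu₁e, ← hu₂e, hw']
  have hx : x₁ = x₂ := by
    rcases le_total x₁.length x₂.length with hle | hle
    · obtain ⟨m, hm⟩ := upw_shift hy hmin hww hle
      cases m with
      | zero => rw [hm]; simp [rep]
      | succ n =>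
          exfalso
          apply hf₂ (x₁ ++ rep y n)
          rw [hm, rep_succ', ← List.append_assoc]
    · obtain ⟨m, hm⟩ := upw_shift hy hmin hww.symm hle
      cases m with
      | zero => rw [hm]; simp [rep]
      | succ n =>
          exfalso
          apply hf₁ (x₂ ++ rep y n)
          rw [hm, rep_succ', ← List.append_assoc]
  exact ⟨x₁, hf₁, i₁, i₂, j₁, j₂, hj₁, hj₂, hu₁e, hv₁e, by rw [hx]; exact hu₂e, hv₂e⟩
end

section
/- For any ultimately periodic ω-word w = u v^ω, the set of all decompositions of w equals ⋃_{k=1}^{n} { (x_k y_k^i, y_k^j) : i ≥ 0, j ≥ 1 }, where n is the length of the smallest period of (u, v) and (x_k, y_k) ranges over the n shortest forms corresponding to the n distinct cyclic rotations of the smallest period. -/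
/-- Cyclic rotation of a finite word by `k` positions. -/
def rot {α : Type} (r : List α) (k : ℕ) : List α := r.drop k ++ r.take k

/-!
A decomposition `(u', v')` of `w` is determined by the suffix `w[|u'|..]`, which equals `v'^ω`.
Every suffix of `w` is eventually periodic with the smallest period `r`, so a suffix that is
purely periodic is `(rot r k)^ω` for some `k < |r|`, and its periods are then exactly the
multiples of `|r|`; hence `v'` is a power of `rot r k`. The positions `ℓ` with
`w[ℓ..] = (rot r k)^ω` differ by multiples of `|r|`, so `u'` is the shortest such prefix `x_k`
followed by a power of `rot r k`.
-/

open Function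

namespace OmegaWord

variable {α : Type}

/-- Written as `W (i + ℓ)` so that `tailW f p = f` unfolds to `Periodic f p`. -/
def tailW (W : ℕ → α) (ℓ : ℕ) : ℕ → α := fun i => W (i + ℓ)

def prefixW (W : ℕ → α) (ℓ : ℕ) : List α := List.ofFn fun i : Fin ℓ => W i

@[simp]
lemma length_prefixW (W : ℕ → α) (ℓ : ℕ) : (prefixW W ℓ).length = ℓ := List.length_ofFn

@[simp]
lemma getElem_prefixW (W : ℕ → α) (ℓ i : ℕ) (h : i < (prefixW W ℓ).length) :
    (prefixW W ℓ)[i] = W i := by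
  simp [prefixW]

lemma tailW_tailW (W : ℕ → α) (a c : ℕ) : tailW (tailW W a) c = tailW W (a + c) := by
  funext i
  simp only [tailW, Nat.add_assoc, Nat.add_comm c a]

lemma tailW_eq_self_iff {f : ℕ → α} {p : ℕ} : tailW f p = f ↔ Periodic f p := funext_iff

lemma prependW_eq_iff {u : List α} {f W : ℕ → α} :
    prependW u f = W ↔ u = prefixW W u.length ∧ tailW W u.length = f := by
  constructor
  · rintro rfl
    refine ⟨List.ext_getElem (by simp) fun i h _ => ?_, funext fun i => ?_⟩
    · simp [prependW, h]
    · simp [tailW, prependW]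
  · rintro ⟨hu, hf⟩
    funext i
    unfold prependW
    split_ifs with h
    · exact (List.getElem_of_eq hu h).trans (getElem_prefixW _ _ _ _)
    · rw [← hf, tailW, Nat.sub_add_cancel (by omega)]

lemma prependW_append (a b : List α) (f : ℕ → α) :
    prependW (a ++ b) f = prependW a (prependW b f) := by
  refine prependW_eq_iff.2 ⟨List.ext_getElem (by simp) fun i h _ => ?_, funext fun i => ?_⟩
  · rcases Nat.lt_or_ge i a.length with hi | hi
    · simp [prependW, hi, List.getElem_append_left hi]
    · simp [prependW, List.getElem_append_right hi, Nat.not_lt.2 hi,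
        show i - a.length < b.length by simp at h; omega]
  · simp only [tailW, prependW, List.length_append]
    rw [dif_neg (by omega), dif_neg (by omega)]
    congr 1
    omega

lemma eq_of_prependW_eq_self {w : List α} {f g : ℕ → α} (hw : w ≠ [])
    (hf : prependW w f = f) (hg : prependW w g = g) : f = g := by
  funext i
  induction i using Nat.strong_induction_on with
  | _ i ih =>
    rw [← hf, ← hg]
    unfold prependW
    split_ifs with h
    · rfl
    · exact ih _ (by have := List.length_pos_iff.2 hw; omega)

lemma rep_succ (v : List α) (k : ℕ) : rep v (k + 1) = v ++ rep v k := by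
  simp [rep, List.replicate_succ]

lemma length_rep (v : List α) (k : ℕ) : (rep v k).length = k * v.length := by
  induction k with
  | zero => simp [rep]
  | succ k ih => rw [rep_succ, List.length_append, ih, Nat.succ_mul, Nat.add_comm]

lemma length_rot (r : List α) (k : ℕ) : (rot r k).length = r.length := by
  simp only [rot, List.length_append, List.length_drop, List.length_take]
  omega

lemma rot_ne_nil {r : List α} (hr : r ≠ []) (k : ℕ) : rot r k ≠ [] := by
  rw [← List.length_pos_iff, length_rot]
  exact List.length_pos_iff.2 hr

lemma _root_.Function.Periodic.gcd_nat {f : ℕ → α} {m n : ℕ} (hm : Periodic f m)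
    (hn : Periodic f n) : Periodic f (m.gcd n) := by
  induction m, n using Nat.gcd.induction with
  | H0 n => simpa using hn
  | H1 m n _ ih =>
    rw [Nat.gcd_rec]
    refine ih (fun x => ?_) hm
    rw [← hm.nat_mul (n / m) (x + n % m), Nat.cast_id, Nat.add_assoc, Nat.mod_add_div', hn]

lemma _root_.Function.Periodic.of_tailW {f : ℕ → α} {n c p : ℕ} (hf : Periodic f n)
    (hn : 0 < n) (h : Periodic (tailW f c) p) : Periodic f p := by
  intro x
  have hc : c ≤ x + c * n := le_add_left (Nat.le_mul_of_pos_right c hn)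
  have hshift := h (x + c * n - c)
  simp only [tailW, Nat.add_right_comm _ p c, Nat.sub_add_cancel hc] at hshift
  calc f (x + p) = f (x + c * n + p) := by rw [Nat.add_right_comm]; exact (hf.nat_mul c _).symm
    _ = f (x + c * n) := hshift
    _ = f x := hf.nat_mul c x

lemma periodic_of_tailW_eq {W f : ℕ → α} {ℓ ℓ' : ℕ} (h : tailW W ℓ = f)
    (h' : tailW W ℓ' = f) (hle : ℓ ≤ ℓ') : Periodic f (ℓ' - ℓ) := by
  rw [← tailW_eq_self_iff, ← h, tailW_tailW, Nat.add_sub_cancel' hle, h, h']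

/-- For `f = y_k^ω` this is the `x_k` of the shortest form `(x_k, y_k)`; it is `[]` (from
`sInf ∅ = 0`) when no suffix of `W` is `f`. -/
noncomputable def minPrefix (W f : ℕ → α) : List α := prefixW W (sInf {ℓ | tailW W ℓ = f})

lemma prependW_minPrefix {W f : ℕ → α} (h : ∃ ℓ, tailW W ℓ = f) :
    prependW (minPrefix W f) f = W :=
  prependW_eq_iff.2 ⟨by simp [minPrefix], by
    rw [minPrefix, length_prefixW]
    exact Nat.sInf_mem (s := {ℓ | tailW W ℓ = f}) h⟩

lemma length_minPrefix_le {W f : ℕ → α} {ℓ : ℕ} (h : tailW W ℓ = f) :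
    (minPrefix W f).length ≤ ℓ := by
  simpa [minPrefix] using Nat.sInf_le (show ℓ ∈ {ℓ | tailW W ℓ = f} from h)

section PeriodicWord

variable [Inhabited α]

lemma periodW_of_lt {v : List α} {i : ℕ} (h : i < v.length) : periodW v i = v[i] := by
  simp [periodW, Nat.mod_eq_of_lt h, h]

lemma periodic_periodW (v : List α) : Periodic (periodW v) v.length := by
  intro i
  simp [periodW]

lemma prefixW_periodW (v : List α) : prefixW (periodW v) v.length = v :=
  List.ext_getElem (by simp) fun i h _ => by simp [periodW_of_lt (by simpa using h)]

lemma take_eq_prefixW_periodW (v : List α) {k : ℕ} (hk : k ≤ v.length) :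
    v.take k = prefixW (periodW v) k :=
  List.ext_getElem (by simpa using hk) fun i _ h => by
    simp [periodW_of_lt (show i < v.length by simp at h; omega)]

lemma prependW_periodW (v : List α) : prependW v (periodW v) = periodW v :=
  prependW_eq_iff.2 ⟨(prefixW_periodW v).symm, tailW_eq_self_iff.2 (periodic_periodW v)⟩

lemma prependW_rep_periodW (v : List α) (k : ℕ) :
    prependW (rep v k) (periodW v) = periodW v := by
  induction k with
  | zero => rfl
  | succ k ih => rw [rep_succ, prependW_append, ih, prependW_periodW]

lemma periodW_rep (v : List α) {j : ℕ} (hj : j ≠ 0) : periodW (rep v j) = periodW v := by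
  rcases eq_or_ne v [] with rfl | hv
  · simp [rep]
  · refine eq_of_prependW_eq_self ?_ (prependW_periodW _) (prependW_rep_periodW v j)
    rw [← List.length_pos_iff, length_rep]
    exact Nat.mul_pos (Nat.pos_of_ne_zero hj) (List.length_pos_iff.2 hv)

lemma eq_rep_of_periodW_eq {w y : List α} {j : ℕ} (h : periodW w = periodW y)
    (hlen : w.length = j * y.length) : w = rep y j := by
  rcases eq_or_ne j 0 with rfl | hj
  · simpa [rep] using hlen
  · rw [← prefixW_periodW w, ← prefixW_periodW (rep y j), periodW_rep y hj, h, length_rep,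
      hlen]

lemma tailW_periodW {r : List α} (hr : r ≠ []) {k : ℕ} (hk : k ≤ r.length) :
    tailW (periodW r) k = periodW (rot r k) := by
  have hsplit : prependW (r.take k) (prependW (r.drop k) (periodW r)) = periodW r := by
    rw [← prependW_append, List.take_append_drop, prependW_periodW]
  have htail : tailW (periodW r) k = prependW (r.drop k) (periodW r) := by
    simpa [hk] using (prependW_eq_iff.1 hsplit).2
  refine eq_of_prependW_eq_self (rot_ne_nil hr k) ?_ (prependW_periodW _)
  rw [rot, prependW_append, htail, hsplit]

lemma tailW_periodW_mod {r : List α} (hr : r ≠ []) (c : ℕ) :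
    tailW (periodW r) c = periodW (rot r (c % r.length)) := by
  rw [← tailW_periodW hr (Nat.mod_lt c (List.length_pos_iff.2 hr)).le]
  funext i
  simp only [tailW]
  rw [← (periodic_periodW r).map_mod_nat, ← (periodic_periodW r).map_mod_nat (i + c % _),
    Nat.add_mod_mod]

lemma exists_tailW_eq_periodW_rot {W : ℕ → α} {r : List α} {a b m : ℕ} (hr : r ≠ [])
    (hb : tailW W b = periodW r) (hp : Periodic (tailW W a) m) (hm : 0 < m) :
    ∃ k < r.length, tailW W a = periodW (rot r k) := by
  refine ⟨(a + b * m - b) % r.length, Nat.mod_lt _ (List.length_pos_iff.2 hr), ?_⟩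
  have hbm : b ≤ a + b * m := le_add_left (Nat.le_mul_of_pos_right b hm)
  calc tailW W a = tailW (tailW W a) (b * m) := (tailW_eq_self_iff.2 (hp.nat_mul b)).symm
    _ = tailW (tailW W b) (a + b * m - b) := by
      rw [tailW_tailW, tailW_tailW, Nat.add_sub_cancel' hbm]
    _ = _ := by rw [hb, tailW_periodW_mod hr]

lemma _root_.IsSmallestPeriod.length_dvd_s9 {r v : List α} (hr : IsSmallestPeriod r v) {p : ℕ}
    (hp : Periodic (periodW r) p) (hp0 : 0 < p) : r.length ∣ p := by
  obtain ⟨hr0, -, -, hmin⟩ := hr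
  set g := p.gcd r.length
  have hg : Periodic (periodW r) g := hp.gcd_nat (periodic_periodW r)
  have hg0 : 0 < g := Nat.gcd_pos_of_pos_left _ hp0
  have hgn : g ≤ r.length := Nat.le_of_dvd (List.length_pos_iff.2 hr0) (Nat.gcd_dvd_right _ _)
  by_contra hdvd
  have hgn' : g ≠ r.length := fun h => hdvd (h ▸ Nat.gcd_dvd_left _ _)
  -- otherwise `r.take (gcd p |r|)` is a shorter period of `r^ω`
  have htake : (r.take g).length = g := by simpa using hgn
  have htake0 : r.take g ≠ [] := by
    rw [← List.length_pos_iff, htake]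
    exact hg0
  refine hmin (r.take g) htake0 (List.take_prefix _ _) ?_ ?_
  · intro h
    exact hgn' (htake ▸ congrArg List.length h)
  · refine eq_of_prependW_eq_self htake0 (prependW_periodW _) ?_
    refine prependW_eq_iff.2 ⟨?_, ?_⟩ <;> rw [htake]
    · exact take_eq_prefixW_periodW r hgn
    · exact tailW_eq_self_iff.2 hg

lemma _root_.IsSmallestPeriod.length_dvd_of_periodic_rot {r v : List α}
    (hr : IsSmallestPeriod r v) {k p : ℕ} (hk : k ≤ r.length)
    (hp : Periodic (periodW (rot r k)) p) : r.length ∣ p := by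
  rcases Nat.eq_zero_or_pos p with rfl | hp0
  · exact dvd_zero _
  rw [← tailW_periodW hr.1 hk] at hp
  exact hr.length_dvd_s9 ((periodic_periodW r).of_tailW (List.length_pos_iff.2 hr.1) hp) hp0

lemma minPrefix_ne_append {W : ℕ → α} {y : List α} (hy : y ≠ [])
    (h : ∃ ℓ, tailW W ℓ = periodW y) (x : List α) : minPrefix W (periodW y) ≠ x ++ y := by
  intro hxy
  have hx : prependW x (periodW y) = W := by
    rw [← prependW_periodW y, ← prependW_append, ← hxy, prependW_minPrefix h]
  have hle := length_minPrefix_le (prependW_eq_iff.1 hx).2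
  rw [hxy, List.length_append] at hle
  have := List.length_pos_iff.2 hy
  omega

lemma exists_eq_rep_of_prependW_eq {W : ℕ → α} {r v u' v' : List α} {b : ℕ}
    (hr : IsSmallestPeriod r v) (hWr : tailW W b = periodW r) (hv' : v' ≠ [])
    (h : prependW u' (periodW v') = W) :
    ∃ k < r.length, ∃ i j : ℕ, 1 ≤ j ∧
      u' = minPrefix W (periodW (rot r k)) ++ rep (rot r k) i ∧ v' = rep (rot r k) j := by
  obtain ⟨hu', ha⟩ := prependW_eq_iff.1 h
  obtain ⟨k, hk, hak⟩ := exists_tailW_eq_periodW_rot hr.1 hWr (ha ▸ periodic_periodW v')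
    (List.length_pos_iff.2 hv')
  set y := rot r k
  set x := minPrefix W (periodW y)
  have hx : prependW x (periodW y) = W := prependW_minPrefix ⟨_, hak⟩
  have hv'y : periodW v' = periodW y := ha.symm.trans hak
  obtain ⟨j, hj⟩ : r.length ∣ v'.length :=
    hr.length_dvd_of_periodic_rot hk.le (hv'y ▸ periodic_periodW v')
  have hxu' : x.length ≤ u'.length := length_minPrefix_le hak
  obtain ⟨i, hi⟩ : r.length ∣ u'.length - x.length :=
    hr.length_dvd_of_periodic_rot hk.le (periodic_of_tailW_eq (prependW_eq_iff.1 hx).2 hak hxu')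
  have hxy : prependW (x ++ rep y i) (periodW y) = W := by
    rw [prependW_append, prependW_rep_periodW, hx]
  refine ⟨k, hk, i, j, ?_, ?_, eq_rep_of_periodW_eq hv'y (by rw [hj, length_rot, mul_comm])⟩
  · exact Nat.pos_of_ne_zero (by rintro rfl; exact hv' (List.length_eq_zero_iff.1 hj))
  · calc u' = prefixW W u'.length := hu'
      _ = prefixW W (x ++ rep y i).length := by
        rw [List.length_append, length_rep, length_rot, Nat.mul_comm, ← hi,
          Nat.add_sub_cancel' hxu']
      _ = x ++ rep y i := (prependW_eq_iff.1 hxy).1.symm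

end PeriodicWord

end OmegaWord

open OmegaWord

theorem stmt_9_general {α : Type} [Inhabited α] (u v r : List α)
    (hr : IsSmallestPeriod r v) :
    ∃ X : ℕ → List α,
      (∀ k, k < r.length →
        (prependW (X k) (periodW (rot r k)) = upw u v ∧
          ∀ x' : List α, X k ≠ x' ++ rot r k)) ∧
      ∀ u' v' : List α, v' ≠ [] →
        (prependW u' (periodW v') = upw u v ↔
          ∃ k, k < r.length ∧ ∃ (i j : ℕ), 1 ≤ j ∧
            u' = X k ++ rep (rot r k) i ∧ v' = rep (rot r k) j) := by
  set W := upw u v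
  have hWr : tailW W u.length = periodW r := by
    rw [hr.2.2.1]
    exact (prependW_eq_iff.1 rfl).2
  have hrot : ∀ k ≤ r.length, tailW W (u.length + k) = periodW (rot r k) := by
    intro k hk
    rw [← tailW_tailW, hWr, tailW_periodW hr.1 hk]
  have hX : ∀ k ≤ r.length,
      prependW (minPrefix W (periodW (rot r k))) (periodW (rot r k)) = W :=
    fun k hk => prependW_minPrefix ⟨_, hrot k hk⟩
  refine ⟨fun k => minPrefix W (periodW (rot r k)),
    fun k hk => ⟨hX k hk.le, minPrefix_ne_append (rot_ne_nil hr.1 k) ⟨_, hrot k hk.le⟩⟩,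
    fun u' v' hv' => ⟨exists_eq_rep_of_prependW_eq hr hWr hv', ?_⟩⟩
  rintro ⟨k, hk, i, j, hj, rfl, rfl⟩
  rw [periodW_rep _ (by omega), prependW_append, prependW_rep_periodW, hX k hk.le]

/-- The decompositions of `u v^ω` are exactly the pairs `(x_k y_k^i, y_k^j)`
(`i ≥ 0`, `j ≥ 1`), where `y_k` ranges over the `n` cyclic rotations of the
smallest period `r` (`n = |r|`) and `(x_k, y_k)` is the corresponding
shortest form. -/
theorem stmt_9 {α : Type} [Inhabited α] (u v r : List α) (hv : v ≠ [])
    (hr : IsSmallestPeriod r v) :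
    ∃ X : ℕ → List α,
      (∀ k, k < r.length →
        (prependW (X k) (periodW (rot r k)) = upw u v ∧
          ∀ x' : List α, X k ≠ x' ++ rot r k)) ∧
      ∀ u' v' : List α, v' ≠ [] →
        (prependW u' (periodW v') = upw u v ↔
          ∃ k, k < r.length ∧ ∃ (i j : ℕ), 1 ≤ j ∧
            u' = X k ++ rep (rot r k) i ∧ v' = rep (rot r k) j) :=
  stmt_9_general u v r hr
end

section
/- There exists a deterministic finite automaton D (over alphabet Σ ∪ {$}) with O(|v|·(|u|+|v|)) states recognizing exactly the language { u' $ v' : u' ∈ Σ*, v' ∈ Σ⁺, u' v'^ω = u v^ω }, i.e., all decompositions of the fixed ultimately periodic word u v^ω. -/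
/-!
Let `n₀` be the least preperiod and `p` the least period of `w = u v^ω`; the periods of the
periodic stream `w.drop n₀` are exactly the multiples of `p`. Hence `u' v'^ω = w` iff `u'v'` is a
prefix of `w`, `n₀ ≤ |u'|` and `p ∣ |v'|`. A left quotient of the language of the encodings
`u' $ v'` is then determined, before the `$`, by the position reached in `w` folded into
`[0, n₀ + p)`, and after it by the current position modulo `p`, the number of letters read modulo
`p` and whether any letter was read. By Myhill–Nerode the minimal automaton has at most
`n₀ + p + 2p² + 1 ≤ 4 |v| (|u| + |v|)` states.
-/

open Function

namespace Stream'

variable {α : Type}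

theorem iterate_tail (n : ℕ) (s : Stream' α) : tail^[n] s = s.drop n := by
  induction n generalizing s with
  | zero => rfl
  | succ n ih => rw [iterate_succ_apply, ih, drop_tail']

theorem isPeriodicPt_tail_iff {n : ℕ} {s : Stream' α} :
    IsPeriodicPt tail n s ↔ ∀ i, s.get (i + n) = s.get i := by
  rw [IsPeriodicPt, IsFixedPt, iterate_tail, Stream'.ext_iff]
  rfl

theorem appendStream_eq_iff {x : List α} {a s : Stream' α} :
    x ++ₛ a = s ↔ s.take x.length = x ∧ s.drop x.length = a := by
  constructor
  · rintro rfl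
    exact ⟨by simpa using take_append_of_le_length x.length x a le_rfl, drop_append_stream x a⟩
  · rintro ⟨hx, ha⟩
    rw [← hx, ← ha, append_take_drop]

theorem eq_of_isPeriodicPt_of_take_eq {n : ℕ} (hn : 0 < n) {s t : Stream' α}
    (hs : IsPeriodicPt tail n s) (ht : IsPeriodicPt tail n t) (h : s.take n = t.take n) :
    s = t := by
  have get_eq : ∀ {r : Stream' α}, IsPeriodicPt tail n r → ∀ i,
      r.get i = (r.take n)[i % n]'(by simpa using Nat.mod_lt i hn) := by
    intro r hr i
    rw [take_get, ← head_drop, ← head_drop, ← iterate_tail, ← iterate_tail,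
      hr.iterate_mod_apply]
  ext i
  rw [get_eq hs, get_eq ht]
  simp only [h]

theorem exists_preperiod_period {w : Stream' α}
    (hw : ∃ m k, 0 < k ∧ IsPeriodicPt tail k (w.drop m)) :
    ∃ n₀ p, 0 < p ∧ ∀ m k, 0 < k → (IsPeriodicPt tail k (w.drop m) ↔ n₀ ≤ m ∧ p ∣ k) := by
  classical
  have hw' : ∃ m, w.drop m ∈ periodicPts tail := by
    obtain ⟨m, k, hk, h⟩ := hw
    exact ⟨m, mk_mem_periodicPts hk h⟩
  set n₀ := Nat.find hw'
  have minimalPeriod_drop : ∀ m, n₀ ≤ m →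
      minimalPeriod tail (w.drop m) = minimalPeriod tail (w.drop n₀) := by
    intro m hm
    rw [← Nat.add_sub_cancel' hm, ← drop_drop, ← iterate_tail]
    exact minimalPeriod_apply_iterate (Nat.find_spec hw') _
  refine ⟨n₀, _, minimalPeriod_pos_of_mem_periodicPts (Nat.find_spec hw'), fun m k hk => ?_⟩
  constructor
  · intro h
    have hm : n₀ ≤ m := Nat.find_min' hw' (mk_mem_periodicPts hk h)
    exact ⟨hm, minimalPeriod_drop m hm ▸ h.minimalPeriod_dvd⟩
  · rintro ⟨hm, hdvd⟩
    exact isPeriodicPt_iff_minimalPeriod_dvd.2 (minimalPeriod_drop m hm ▸ hdvd)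

theorem drop_add_mod {w : Stream' α} {n₀ p : ℕ} (hper : IsPeriodicPt tail p (w.drop n₀))
    (m : ℕ) : w.drop (n₀ + m % p) = w.drop (n₀ + m) := by
  rw [← drop_drop, ← drop_drop, ← iterate_tail (m % p), ← iterate_tail m,
    hper.iterate_mod_apply]

end Stream'

section UltimatelyPeriodic

open Stream'

variable {α : Type}

theorem prependW_eq_appendStream (u : List α) (s : ℕ → α) : prependW u s = u ++ₛ s := by
  funext i
  rcases lt_or_ge i u.length with hi | hi
  · exact (dif_pos hi).trans (get_append_left i u s hi).symm
  · obtain ⟨j, rfl⟩ := Nat.exists_eq_add_of_le hi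
    exact (dif_neg (by omega)).trans ((congrArg s (by omega)).trans (get_append_right j u s).symm)

variable [Inhabited α]

theorem isPeriodicPt_periodW (v : List α) : IsPeriodicPt tail v.length (periodW v) :=
  isPeriodicPt_tail_iff.2 fun i => by
    show periodW v (i + v.length) = periodW v i
    simp [periodW]

theorem take_periodW (v : List α) : Stream'.take v.length (periodW v) = v := by
  refine List.ext_getElem (length_take ..) fun i _ hi => (take_get ..).trans ?_
  show periodW v i = v[i]
  simp [periodW, Nat.mod_eq_of_lt hi, hi]

theorem upw_eq_iff {u' v' : List α} (hv' : v' ≠ []) {w : Stream' α} :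
    upw u' v' = w ↔ w.take u'.length = u' ∧ IsPeriodicPt tail v'.length (w.drop u'.length) ∧
      (w.drop u'.length).take v'.length = v' := by
  rw [upw, prependW_eq_appendStream]
  refine appendStream_eq_iff.trans (and_congr_right fun _ => ⟨?_, fun ⟨hper, htake⟩ => ?_⟩)
  · intro h
    rw [h]
    exact ⟨isPeriodicPt_periodW v', take_periodW v'⟩
  · exact eq_of_isPeriodicPt_of_take_eq (List.length_pos_iff.2 hv') hper
      (isPeriodicPt_periodW v') (htake.trans (take_periodW v').symm)

end UltimatelyPeriodic

theorem Language.exists_dfa_card_le_of_leftQuotient_mem_range {Γ ι : Type} [Fintype ι]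
    {L : Language Γ} (f : ι → Language Γ) (hL : L ∈ Set.range f)
    (hf : ∀ i a, (f i).leftQuotient [a] ∈ Set.range f) :
    ∃ (σ : Type) (_ : Fintype σ) (D : DFA Γ σ),
      Fintype.card σ ≤ Fintype.card ι ∧ D.accepts = L := by
  have hsub : Set.range L.leftQuotient ⊆ Set.range f := by
    rintro _ ⟨x, rfl⟩
    induction x using List.reverseRecOn with
    | nil => exact hL
    | append_singleton x a ih =>
      obtain ⟨i, hi⟩ := ih
      rw [Language.leftQuotient_append, ← hi]
      exact hf i a
  have : Finite (Set.range L.leftQuotient) := ((Set.finite_range f).subset hsub).to_subtype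
  let _ := Fintype.ofFinite (Set.range L.leftQuotient)
  choose g hg using fun s : Set.range L.leftQuotient => hsub s.2
  refine ⟨_, inferInstance, L.toDFA, ?_, L.accepts_toDFA⟩
  exact Fintype.card_le_of_injective g fun s t h => Subtype.ext ((hg s).symm.trans (h ▸ hg t))

namespace Stream'

variable {α : Type}

def splitLang (p : ℕ) (s : Stream' α) (r : ℕ) : Language (Option α) :=
  {x | ∃ m n, r ≤ m ∧ p ∣ n ∧ 0 < n ∧
    x = (s.take m).map some ++ none :: ((s.drop m).take n).map some}

def loopLang (p : ℕ) (s : Stream' α) (d : ℕ) (b : Bool) : Language (Option α) :=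
  {x | ∃ n, p ∣ d + n ∧ (b ∨ 0 < n) ∧ x = (s.take n).map some}

section LeftQuotient

variable (p : ℕ) (s : Stream' α)

open scoped Classical in
theorem splitLang_leftQuotient_some (r : ℕ) (a : α) :
    (splitLang p s r).leftQuotient [some a] =
      if a = s.head then splitLang p s.tail (r - 1) else 0 := by
  ext x
  rw [Language.mem_leftQuotient]
  split_ifs with ha
  · constructor
    · rintro ⟨_ | m, n, hr, hpn, hn, hx⟩
      · simp at hx
      · simp only [take_succ, drop_succ, List.map_cons, List.cons_append, List.cons.injEq] at hx
        exact ⟨m, n, by omega, hpn, hn, hx.2⟩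
    · rintro ⟨m, n, hr, hpn, hn, rfl⟩
      exact ⟨m + 1, n, by omega, hpn, hn, by rw [take_succ, drop_succ, ha]; rfl⟩
  · refine iff_of_false ?_ (Language.notMem_zero x)
    rintro ⟨_ | m, n, -, -, -, hx⟩
    · simp at hx
    · simp only [take_succ, List.map_cons, List.cons_append, List.cons.injEq,
        Option.some.injEq] at hx
      exact ha hx.1

theorem splitLang_leftQuotient_none (r : ℕ) :
    (splitLang p s r).leftQuotient [none] = if r = 0 then loopLang p s 0 false else 0 := by
  ext x
  rw [Language.mem_leftQuotient]
  split_ifs with hr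
  · constructor
    · rintro ⟨_ | m, n, -, hpn, hn, hx⟩
      · simp only [take_zero, List.map_nil, List.nil_append, drop_zero, List.singleton_append,
          List.cons.injEq] at hx
        exact ⟨n, by simpa using hpn, Or.inr hn, hx.2⟩
      · simp [take_succ] at hx
    · rintro ⟨n, hpn, hn, rfl⟩
      exact ⟨0, n, by omega, by simpa using hpn, by simpa using hn, by simp⟩
  · refine iff_of_false ?_ (Language.notMem_zero x)
    rintro ⟨_ | m, n, hm, -, -, hx⟩
    · omega
    · simp [take_succ] at hx

open scoped Classical in
theorem loopLang_leftQuotient_some (d : ℕ) (b : Bool) (a : α) :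
    (loopLang p s d b).leftQuotient [some a] =
      if a = s.head then loopLang p s.tail (d + 1) true else 0 := by
  ext x
  rw [Language.mem_leftQuotient]
  split_ifs with ha
  · constructor
    · rintro ⟨_ | n, hpn, -, hx⟩
      · simp at hx
      · simp only [take_succ, List.map_cons, List.singleton_append, List.cons.injEq] at hx
        exact ⟨n, by rwa [Nat.add_right_comm, Nat.add_assoc], by simp, hx.2⟩
    · rintro ⟨n, hpn, -, rfl⟩
      refine ⟨n + 1, by rwa [Nat.add_right_comm, Nat.add_assoc] at hpn, by simp, ?_⟩
      rw [take_succ, ha]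
      rfl
  · refine iff_of_false ?_ (Language.notMem_zero x)
    rintro ⟨_ | n, -, -, hx⟩
    · simp at hx
    · simp only [take_succ, List.map_cons, List.singleton_append, List.cons.injEq,
        Option.some.injEq] at hx
      exact ha hx.1

theorem loopLang_leftQuotient_none (d : ℕ) (b : Bool) :
    (loopLang p s d b).leftQuotient [none] = 0 := by
  ext x
  refine iff_of_false ?_ (Language.notMem_zero x)
  rintro ⟨_ | n, -, -, hx⟩ <;> simp [take_succ] at hx

theorem loopLang_mod (d : ℕ) (b : Bool) : loopLang p s (d % p) b = loopLang p s d b := by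
  ext x
  exact exists_congr fun n => and_congr_left' (((Nat.mod_modEq d p).add_right n).dvd_iff dvd_rfl)

end LeftQuotient

-- `inl k`: before the `$`, at position `k` of `w`; `inr (d, c, b)`: after the `$`, having read
-- `d` letters modulo `p` (`b` records whether any), at position `n₀ + c` of `w`.
def stateLang (p : ℕ) (w : Stream' α) (n₀ : ℕ) :
    Option (Fin (n₀ + p) ⊕ Fin p × Fin p × Bool) → Language (Option α)
  | none => 0
  | some (.inl k) => splitLang p (w.drop k) (n₀ - k)
  | some (.inr (d, c, b)) => loopLang p (w.drop (n₀ + c)) d b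

variable {w : Stream' α} {n₀ p : ℕ}

theorem stateLang_leftQuotient_mem_range (hp : 0 < p) (hper : IsPeriodicPt tail p (w.drop n₀))
    (i : Option (Fin (n₀ + p) ⊕ Fin p × Fin p × Bool)) (a : Option α) :
    (stateLang p w n₀ i).leftQuotient [a] ∈ Set.range (stateLang p w n₀) := by
  classical
  rcases i with _ | k | ⟨d, c, b⟩
  · exact ⟨none, by ext x; exact iff_of_false (Language.notMem_zero x) (Language.notMem_zero _)⟩
  · rcases a with _ | a
    · simp only [stateLang, splitLang_leftQuotient_none]
      split_ifs with hk
      · refine ⟨some (.inr (⟨0, hp⟩, ⟨k - n₀, by omega⟩, false)), ?_⟩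
        simp [stateLang, Nat.add_sub_cancel' (Nat.sub_eq_zero_iff_le.1 hk)]
      · exact ⟨none, rfl⟩
    · simp only [stateLang, splitLang_leftQuotient_some, tail_drop', Nat.sub_sub]
      split_ifs
      · rcases Nat.lt_or_ge (k + 1) (n₀ + p) with hk | hk
        · exact ⟨some (.inl ⟨k + 1, hk⟩), rfl⟩
        · refine ⟨some (.inl ⟨n₀, by omega⟩), ?_⟩
          have hwrap : (k : ℕ) + 1 = n₀ + p := by omega
          simp [stateLang, hwrap, ← drop_add_mod hper p]
      · exact ⟨none, rfl⟩
  · rcases a with _ | a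
    · exact ⟨none, (loopLang_leftQuotient_none ..).symm⟩
    · simp only [stateLang, loopLang_leftQuotient_some, tail_drop']
      split_ifs
      · refine ⟨some (.inr (⟨(d + 1) % p, Nat.mod_lt _ hp⟩, ⟨(c + 1) % p, Nat.mod_lt _ hp⟩,
          true)), ?_⟩
        simp only [stateLang, drop_add_mod hper, loopLang_mod, Nat.add_assoc]
      · exact ⟨none, rfl⟩

theorem exists_dfa_accepts_splitLang (hp : 0 < p) (hper : IsPeriodicPt tail p (w.drop n₀)) :
    ∃ (σ : Type) (_ : Fintype σ) (D : DFA (Option α) σ),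
      Fintype.card σ ≤ n₀ + p + 2 * p * p + 1 ∧ D.accepts = splitLang p w n₀ := by
  obtain ⟨σ, _, D, hcard, hD⟩ := Language.exists_dfa_card_le_of_leftQuotient_mem_range
    (stateLang p w n₀) ⟨some (.inl ⟨0, by omega⟩), rfl⟩ (stateLang_leftQuotient_mem_range hp hper)
  exact ⟨σ, _, D, hcard.trans_eq (by simp; ring), hD⟩

theorem setOf_upw_eq_splitLang [Inhabited α]
    (hw : ∀ m k, 0 < k → (IsPeriodicPt tail k (w.drop m) ↔ n₀ ≤ m ∧ p ∣ k)) :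
    {x | ∃ u' v' : List α, v' ≠ [] ∧ x = u'.map some ++ none :: v'.map some ∧ upw u' v' = w} =
      splitLang p w n₀ := by
  ext x
  constructor
  · rintro ⟨u', v', hv', rfl, h⟩
    obtain ⟨hu', hper', hv''⟩ := (upw_eq_iff hv').1 h
    have hn : 0 < v'.length := List.length_pos_iff.2 hv'
    obtain ⟨hm, hpn⟩ := (hw _ _ hn).1 hper'
    exact ⟨u'.length, v'.length, hm, hpn, hn, by rw [hu', hv'']⟩
  · rintro ⟨m, n, hm, hpn, hn, rfl⟩
    refine ⟨w.take m, (w.drop m).take n, List.ne_nil_of_length_pos (by simpa using hn), rfl,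
      (upw_eq_iff (List.ne_nil_of_length_pos (by simpa using hn))).2 ?_⟩
    simpa only [length_take, true_and, and_true] using (hw m n hn).2 ⟨hm, hpn⟩

end Stream'

theorem stmt_10_general {α : Type} [Inhabited α] :
    ∃ c : ℕ, ∀ u v : List α, v ≠ [] →
      ∃ (σ : Type) (inst : Fintype σ) (D : DFA (Option α) σ),
        @Fintype.card σ inst ≤ c * (v.length * (u.length + v.length)) ∧
        D.accepts = { w : List (Option α) | ∃ u' v' : List α, v' ≠ [] ∧
          w = u'.map some ++ none :: v'.map some ∧
          upw u' v' = upw u v } := by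
  refine ⟨4, fun u v hv => ?_⟩
  have hv₀ : 0 < v.length := List.length_pos_iff.2 hv
  have hper := ((upw_eq_iff (u' := u) (w := upw u v) hv).1 rfl).2.1
  obtain ⟨n₀, p, hp, hw⟩ := Stream'.exists_preperiod_period ⟨u.length, v.length, hv₀, hper⟩
  obtain ⟨hn₀, hpv⟩ := (hw _ _ hv₀).1 hper
  obtain ⟨σ, _, D, hcard, hD⟩ :=
    Stream'.exists_dfa_accepts_splitLang hp ((hw n₀ p hp).2 ⟨le_rfl, dvd_rfl⟩)
  refine ⟨σ, _, D, hcard.trans ?_, hD.trans (Stream'.setOf_upw_eq_splitLang hw).symm⟩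
  have := Nat.le_of_dvd hv₀ hpv
  nlinarith

/-- There is a DFA with `O(|v|·(|u|+|v|))` states over `Σ ∪ {$}` (here `$` is
encoded as `none`) recognizing exactly the encodings `u' $ v'` of the
decompositions of the ω-word `u v^ω`. -/
theorem stmt_10 {α : Type} [Fintype α] [Inhabited α] :
    ∃ c : ℕ, ∀ u v : List α, v ≠ [] →
      ∃ (σ : Type) (inst : Fintype σ) (D : DFA (Option α) σ),
        @Fintype.card σ inst ≤ c * (v.length * (u.length + v.length)) ∧
        D.accepts = { w : List (Option α) | ∃ u' v' : List α, v' ≠ [] ∧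
          w = u'.map some ++ none :: v'.map some ∧
          upw u' v' = upw u v } :=
  stmt_10_general
end

section
/- Let F = (M, {A^u}) be an FDFA and let B̲ be the Büchi automaton obtained from F by the under-approximation construction (whose accepting loops are products M^u_u × (A^u)^{s_u}_v × (A^u)^v_v over accepting states v of A^u). Then every ultimately periodic word accepted by B̲ belongs to UP(F): UP(L(B̲)) ⊆ UP(F). -/
/-- A family of DFAs: a leading DFA `M` (accepting states irrelevant) and a
progress DFA `A s` for each leading state `s`. -/
structure FDFA (α : Type) : Type 1 where
  S : Type
  finS : Fintype S
  M : DFA α S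
  Pσ : S → Type
  finP : ∀ s, Fintype (Pσ s)
  A : ∀ s, DFA α (Pσ s)

/-- The decomposition `(u, v)` is accepted by the FDFA `F`:
`M(uv) = M(u)` and `v ∈ L(A^{M(u)})`. -/
def FDFA.acceptsDecomp {α : Type} (F : FDFA α) (u v : List α) : Prop :=
  F.M.eval (u ++ v) = F.M.eval u ∧ v ∈ (F.A (F.M.eval u)).accepts

/-- `UP(F)`: ultimately periodic words with an accepted decomposition. -/
def FDFA.UPF {α : Type} [Inhabited α] (F : FDFA α) : Set (ℕ → α) :=
  { w | ∃ u v : List α, v ≠ [] ∧ w = upw u v ∧ F.acceptsDecomp u v }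

/-- `L(M^u_u × (A^u)^{s_u}_q × (A^u)^q_q)`: loop words of the
under-approximation component for leading state `u` and progress state `q`. -/
def underLoop {α : Type} (F : FDFA α) (u : F.S) (q : F.Pσ u) : Set (List α) :=
  { y | F.M.evalFrom u y = u ∧ (F.A u).eval y = q ∧ (F.A u).evalFrom q y = q }

/-- `L(M^u_u × (A^u)^{s_u}_q)`: loop words of the over-approximation component
for leading state `u` and progress state `q`. -/
def overLoop {α : Type} (F : FDFA α) (u : F.S) (q : F.Pσ u) : Set (List α) :=
  { y | F.M.evalFrom u y = u ∧ (F.A u).eval y = q }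

/-- The finite word `p` is a prefix of the infinite word `w`. -/
def prefW {α : Type} [Inhabited α] (p : List α) (w : ℕ → α) : Prop :=
  ∀ i, i < p.length → w i = p.getD i default

/-- `w` is the infinite concatenation `x · ys 0 · ys 1 · ⋯`. -/
def isConcatW {α : Type} [Inhabited α] (x : List α) (ys : ℕ → List α)
    (w : ℕ → α) : Prop :=
  ∀ n : ℕ, prefW (x ++ ((List.range n).map ys).flatten) w

/-- The ω-language of the under-approximation Büchi automaton `B̲`:
`⋃_{u, q accepting} L(M^{q₀}_u) · (L(M^u_u × (A^u)^{s_u}_q × (A^u)^q_q))^ω`. -/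
def underLang {α : Type} [Inhabited α] (F : FDFA α) : Set (ℕ → α) :=
  { w | ∃ (u : F.S) (q : F.Pσ u), q ∈ (F.A u).accept ∧
      ∃ (x : List α) (ys : ℕ → List α), F.M.eval x = u ∧
        (∀ i, ys i ≠ [] ∧ ys i ∈ underLoop F u q) ∧ isConcatW x ys w }

/-- The ω-language of the over-approximation Büchi automaton `B̄`:
`⋃_{u, q accepting} L(M^{q₀}_u) · (L(M^u_u × (A^u)^{s_u}_q))^ω`. -/
def overLang {α : Type} [Inhabited α] (F : FDFA α) : Set (ℕ → α) :=
  { w | ∃ (u : F.S) (q : F.Pσ u), q ∈ (F.A u).accept ∧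
      ∃ (x : List α) (ys : ℕ → List α), F.M.eval x = u ∧
        (∀ i, ys i ≠ [] ∧ ys i ∈ overLoop F u q) ∧ isConcatW x ys w }

/-- `UP(L(B̲))`. -/
def underUP {α : Type} [Inhabited α] (F : FDFA α) : Set (ℕ → α) :=
  UP (underLang F)

/-- `UP(L(B̄))`. -/
def overUP {α : Type} [Inhabited α] (F : FDFA α) : Set (ℕ → α) :=
  UP (overLang F)

/-- Every ultimately periodic word accepted by the under-approximation Büchi
automaton `B̲` of an FDFA `F` is in `UP(F)`. -/
theorem stmt_12 {α : Type} [Inhabited α] (F : FDFA α) :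
    underUP F ⊆ F.UPF := by
  rintro w ⟨u, v, hv, hw, ut, q, hq, x, ys, hx, hys, hcat⟩
  have hvl : 0 < v.length := List.length_pos_iff.2 hv
  -- notation
  set L : ℕ → List α := fun n => ((List.range n).map ys).flatten with hL
  set p : ℕ → ℕ := fun n => (x ++ L n).length with hp
  have hLsucc : ∀ n, L (n + 1) = L n ++ ys n := by
    intro n; simp [hL, List.range_succ]
  have hpsucc : ∀ n, p (n + 1) = p n + (ys n).length := by
    intro n; simp [hp, hLsucc n, Nat.add_assoc]
  have hpm : StrictMono p := strictMono_nat_of_lt_succ (fun n => by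
    have h1 := hpsucc n
    have h2 : 0 < (ys n).length := List.length_pos_iff.2 (hys n).1
    omega)
  have hpn : ∀ n, n ≤ p n := fun n => hpm.le_apply
  -- pigeonhole: two breakpoints with equal residue mod |v|
  obtain ⟨a, b, hab, hua, hdvd⟩ :
      ∃ a b, a < b ∧ u.length ≤ p a ∧ v.length ∣ (p b - p a) := by
    obtain ⟨j1, j2, hne, hfe⟩ := Fintype.exists_ne_map_eq_of_card_lt
      (fun j : Fin (v.length + 1) => (⟨p (u.length + j) % v.length,
        Nat.mod_lt _ hvl⟩ : Fin v.length)) (by simp)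
    have hfe' : p (u.length + j1) % v.length = p (u.length + j2) % v.length := by
      simpa using congrArg Fin.val hfe
    rcases lt_or_gt_of_ne hne with h | h
    · have h' : (j1 : ℕ) < (j2 : ℕ) := h
      exact ⟨u.length + j1, u.length + j2, by omega,
        le_trans (by omega) (hpn _),
        Nat.dvd_of_mod_eq_zero (Nat.sub_mod_eq_zero_of_mod_eq hfe'.symm)⟩
    · have h' : (j2 : ℕ) < (j1 : ℕ) := h
      exact ⟨u.length + j2, u.length + j1, by omega,
        le_trans (by omega) (hpn _),
        Nat.dvd_of_mod_eq_zero (Nat.sub_mod_eq_zero_of_mod_eq hfe')⟩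
  -- the new decomposition
  have hLadd : ∀ n k, L (n + k) = L n ++ ((List.range k).map (fun i => ys (n + i))).flatten := by
    intro n k
    induction k with
    | zero => simp
    | succ k ih => rw [← Nat.add_assoc, hLsucc, ih, List.range_succ]; simp
  set R : List α := ((List.range (b - a)).map (fun i => ys (a + i))).flatten with hR
  have hLb : L b = L a ++ R := by
    have := hLadd a (b - a)
    rwa [Nat.add_sub_cancel' hab.le] at this
  set u' : List α := x ++ L a with hu'
  have hfull : u' ++ R = x ++ L b := by rw [hu', hLb, List.append_assoc]
  have hu'len : u'.length = p a := by simp [hu', hp]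
  have hRlen : R.length = p b - p a := by
    have h2 : u'.length + R.length = p b := by
      rw [← List.length_append, hfull]
    have h3 := (hpm hab).le
    omega
  have hRne : R ≠ [] := by
    intro h
    have := hpm hab
    rw [h] at hRlen
    simp at hRlen
    omega
  have hRl : 0 < R.length := List.length_pos_iff.2 hRne
  refine ⟨u', R, hRne, ?_, ?_, ?_⟩
  · -- w = upw u' R
    -- periodicity of w beyond |u| with period any multiple of |v|
    have hper1 : ∀ i, u.length ≤ i → w (i + v.length) = w i := by
      intro i hi
      rw [hw]
      unfold upw prependW periodW
      rw [dif_neg (by omega), dif_neg (by omega)]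
      congr 1
      have h1 : i + v.length - u.length = (i - u.length) + v.length := by omega
      rw [h1, Nat.add_mod_right]
    have hperk : ∀ k i, u.length ≤ i → w (i + k * v.length) = w i := by
      intro k
      induction k with
      | zero => simp
      | succ k ih =>
        intro i hi
        have : i + (k + 1) * v.length = (i + k * v.length) + v.length := by ring
        rw [this, hper1 _ (by omega), ih i hi]
    obtain ⟨k, hk⟩ := hdvd
    have hperR : ∀ i, p a ≤ i → w (i + R.length) = w i := by
      intro i hi
      rw [hRlen, hk]
      have : i + v.length * k = i + k * v.length := by ring
      rw [this]
      exact hperk k i (by omega)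
    -- w agrees with u' ++ R on its length
    have hpref : ∀ i < (u' ++ R).length, w i = (u' ++ R).getD i default := by
      intro i hi
      rw [hfull] at hi ⊢
      exact hcat b i hi
    funext i
    induction i using Nat.strong_induction_on with
    | _ i ih =>
      by_cases h1 : i < u'.length
      · rw [hpref i (by simp only [List.length_append]; omega)]
        unfold upw prependW
        rw [dif_pos h1, List.getD_append _ _ _ _ h1,
          List.getD_eq_getElem _ _ h1]
        simp
      · by_cases h2 : i < u'.length + R.length
        · rw [hpref i (by simp only [List.length_append]; omega)]
          unfold upw prependW periodW
          rw [dif_neg h1, List.getD_append_right _ _ _ _ (by omega)]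
          congr 1
          exact (Nat.mod_eq_of_lt (by omega)).symm
        · have hstep : w (i - R.length + R.length) = w (i - R.length) :=
            hperR _ (by omega)
          have hi' : i - R.length + R.length = i := by omega
          rw [hi'] at hstep
          rw [hstep, ih (i - R.length) (by omega)]
          unfold upw prependW periodW
          rw [dif_neg (by omega), dif_neg h1]
          congr 1
          have h3 : i - u'.length = (i - R.length - u'.length) + R.length := by
            omega
          rw [h3, Nat.add_mod_right]
  · -- M (u' ++ R) = M u'
    have hMloop : ∀ (l : List (List α)), (∀ y ∈ l, F.M.evalFrom ut y = ut) →
        F.M.evalFrom ut l.flatten = ut := by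
      intro l hl
      induction l with
      | nil => simp [DFA.evalFrom]
      | cons c t ih =>
        rw [List.flatten_cons, DFA.evalFrom_of_append, hl c (by simp)]
        exact ih (fun y hy => hl y (by simp [hy]))
    have hMblocks : ∀ n, F.M.eval (x ++ L n) = ut := by
      intro n
      rw [DFA.eval, DFA.evalFrom_of_append, ← DFA.eval, hx]
      exact hMloop _ (by
        intro y hy
        simp only [hL, List.mem_map] at hy
        obtain ⟨i, -, rfl⟩ := hy
        exact (hys i).2.1)
    rw [hfull, hMblocks b, hu', hMblocks a]
  · -- R ∈ L(A ut)
    have hMu' : F.M.eval u' = ut := by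
      rw [hu', DFA.eval, DFA.evalFrom_of_append, ← DFA.eval, hx]
      have hMloop : ∀ (l : List (List α)), (∀ y ∈ l, F.M.evalFrom ut y = ut) →
          F.M.evalFrom ut l.flatten = ut := by
        intro l hl
        induction l with
        | nil => simp [DFA.evalFrom]
        | cons c t ih =>
          rw [List.flatten_cons, DFA.evalFrom_of_append, hl c (by simp)]
          exact ih (fun y hy => hl y (by simp [hy]))
      exact hMloop _ (by
        intro y hy
        simp only [hL, List.mem_map] at hy
        obtain ⟨i, -, rfl⟩ := hy
        exact (hys i).2.1)
    rw [hMu']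
    -- R = ys a ++ rest, eval = q
    have hk1 : b - a = 1 + (b - a - 1) := by omega
    have hRsplit : R = ys a ++
        ((List.range (b - a - 1)).map (fun i => ys (a + 1 + i))).flatten := by
      rw [hR, hk1, show (1 : ℕ) + (b - a - 1) = (b - a - 1) + 1 from by omega]
      rw [List.range_succ_eq_map, List.map_cons, List.flatten_cons,
        List.map_map]
      have hfun : ((fun i => ys (a + i)) ∘ Nat.succ) =
          fun i => ys (a + 1 + i) := by
        funext i
        simp only [Function.comp_apply]
        congr 1
        omega
      rw [hfun]
      simp
    have hAloop : ∀ (l : List (List α)), (∀ y ∈ l, (F.A ut).evalFrom q y = q) →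
        (F.A ut).evalFrom q l.flatten = q := by
      intro l hl
      induction l with
      | nil => simp [DFA.evalFrom]
      | cons c t ih =>
        rw [List.flatten_cons, DFA.evalFrom_of_append, hl c (by simp)]
        exact ih (fun y hy => hl y (by simp [hy]))
    show (F.A ut).eval R ∈ (F.A ut).accept
    rw [hRsplit, DFA.eval, DFA.evalFrom_of_append, ← DFA.eval, (hys a).2.2.1,
      hAloop _ (by
        intro y hy
        simp only [List.mem_map] at hy
        obtain ⟨i, -, rfl⟩ := hy
        exact (hys (a + 1 + i)).2.2.2)]
    exact hq
end

section
/- Let F = (M, {A^u}) be an FDFA and B̄ the Büchi automaton obtained by the over-approximation construction. Then UP(F) ⊆ UP(L(B̄)): every ultimately periodic word having a decomposition accepted by F is accepted by B̄. -/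

lemma flatten_replicate_getD {α : Type} [Inhabited α] (v : List α) :
    ∀ n j, j < n * v.length →
      ((List.replicate n v).flatten).getD j default = v.getD (j % v.length) default := by
  intro n
  induction n with
  | zero => intro j h; omega
  | succ n ih =>
    intro j h
    have hv : 0 < v.length := by
      by_contra hv
      simp [Nat.le_zero.mp (Nat.not_lt.mp hv)] at h
    rw [List.replicate_succ, List.flatten_cons]
    by_cases hj : j < v.length
    · rw [List.getD_append _ _ _ _ hj, Nat.mod_eq_of_lt hj]
    · push_neg at hj
      rw [List.getD_append_right _ _ _ _ hj]
      have h2 : j - v.length < n * v.length := by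
        have : (n + 1) * v.length = n * v.length + v.length := by ring
        omega
      rw [ih (j - v.length) h2]
      congr 1
      conv_rhs => rw [← Nat.sub_add_cancel hj]
      rw [Nat.add_mod_right]

/-- Every ultimately periodic word with a decomposition accepted by the FDFA
`F` is accepted by the over-approximation Büchi automaton `B̄`. -/
theorem stmt_13 {α : Type} [Inhabited α] (F : FDFA α) :
    F.UPF ⊆ overUP F := by
  rintro w ⟨u, v, hv, hw, hM, hA⟩
  refine ⟨u, v, hv, hw, ?_⟩
  have hv0 : 0 < v.length := List.length_pos_iff.mpr hv
  refine ⟨F.M.eval u, (F.A (F.M.eval u)).eval v, hA, u, fun _ => v, rfl,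
    fun i => ⟨hv, ?_, rfl⟩, ?_⟩
  · rw [DFA.eval, DFA.evalFrom_of_append] at hM
    exact hM
  · intro n i hi
    subst hw
    rw [List.map_const', List.length_range] at hi ⊢
    unfold upw prependW
    by_cases h : i < u.length
    · simp only [h, dif_pos]
      rw [List.getD_append _ _ _ _ h, List.getD_eq_getElem _ _ h, List.get_eq_getElem]
    · push_neg at h
      simp only [Nat.not_lt.mpr h, dif_neg, not_lt]
      rw [List.getD_append_right _ _ _ _ h]
      rw [List.length_append, List.length_flatten] at hi
      have : i - u.length < n * v.length := by
        simp [List.map_replicate, Finset.sum_const] at hi ⊢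
        omega
      rw [flatten_replicate_getD v n _ this]
      rfl
end

section
/- Given an FDFA F with leading automaton of n states and largest progress automaton of k states, the under-approximation Büchi automaton B̲ has O(n²k³) states and the over-approximation Büchi automaton B̄ has O(n²k²) states. -/
/-!
`B̲` and `B̄` are instances of one "lasso" construction. Given a DFA `M` and, for each index `i`,
a state `target i` of `M` and a DFA `D i`, a copy of `M` that may jump into a component for
`L(D i)^ω` as soon as `M` reaches `target i` recognises `⋃ i, L(M^{start}_{target i}) · L(D i)^ω`
with `|M| + Σ i, 2 |D i|` states. One component per leading state `u` and accepting progress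
state `q`, with `D` the product DFA for `M^u_u × (A^u)^{s_u}_q (× (A^u)^q_q)`, gives `B̲` (resp.
`B̄`) with `n + nk · 2nk²` (resp. `n + nk · 2nk`) states.

For correctness, an accepting run is cut at consecutive visits to accepting states into finite
paths. The accepting states of the lasso automaton are exactly the component entries, so the
first path reads a prefix leading `M` to a target and each later one a single word of `L(D i)`.
-/

section Words

variable {α : Type}

def sliceW (w : ℕ → α) (a m : ℕ) : List α :=
  List.ofFn fun j : Fin m => w (a + j)

@[simp]
lemma length_sliceW (w : ℕ → α) (a m : ℕ) : (sliceW w a m).length = m :=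
  List.length_ofFn

lemma sliceW_succ (w : ℕ → α) (a m : ℕ) : sliceW w a (m + 1) = w a :: sliceW w (a + 1) m := by
  simp only [sliceW, List.ofFn_succ, Fin.val_zero, Fin.val_succ, Nat.add_zero]
  congr 2
  ext j
  rw [Nat.add_right_comm, Nat.add_assoc]

lemma sliceW_append (w : ℕ → α) (a m m' : ℕ) :
    sliceW w a m ++ sliceW w (a + m) m' = sliceW w a (m + m') := by
  induction m generalizing a with
  | zero => simp [sliceW]
  | succ m ih =>
    rw [sliceW_succ, List.cons_append, show a + (m + 1) = a + 1 + m by omega, ih,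
      show m + 1 + m' = m + m' + 1 by omega, sliceW_succ]

lemma prefW_sliceW [Inhabited α] (w : ℕ → α) (m : ℕ) : prefW (sliceW w 0 m) w := by
  intro i hi
  rw [length_sliceW] at hi
  simp [sliceW, hi]

lemma prefW.of_append [Inhabited α] {p q : List α} {w : ℕ → α} (h : prefW (p ++ q) w) :
    prefW p w := by
  intro i hi
  rw [h i (by simp; omega), List.getD_append _ _ _ _ hi]

lemma prefW.apply_length [Inhabited α] {p q : List α} {a : α} {w : ℕ → α}
    (h : prefW (p ++ a :: q) w) : w p.length = a := by
  rw [h _ (by simp)]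
  simp

lemma flatten_range_succ_map (ys : ℕ → List α) (n : ℕ) :
    ((List.range (n + 1)).map ys).flatten =
      ys 0 ++ ((List.range n).map (fun i => ys (i + 1))).flatten := by
  rw [List.range_succ_eq_map, List.map_cons, List.flatten_cons, List.map_map]
  rfl

lemma isConcatW_iff_append_head [Inhabited α] {x : List α} {ys : ℕ → List α} {w : ℕ → α} :
    isConcatW x ys w ↔ isConcatW (x ++ ys 0) (fun n => ys (n + 1)) w := by
  refine ⟨fun h n => ?_, fun h n => ?_⟩
  · simpa [List.append_assoc, flatten_range_succ_map] using h (n + 1)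
  · cases n with
    | zero => simpa using (by simpa using h 0 : prefW (x ++ ys 0) w).of_append
    | succ n => simpa [List.append_assoc, flatten_range_succ_map] using h n

end Words

namespace NBA

variable {α : Type} (B : NBA α)

/-- A nonempty finite run of `B` from `s` to `t` reading `y` whose intermediate states lie
in `S`. -/
inductive Path (S : Set B.σ) : B.σ → List α → B.σ → Prop
  | single {s t : B.σ} {a : α} : t ∈ B.step s a → Path S s [a] t
  | cons {s t u : B.σ} {a : α} {y : List α} :
      t ∈ B.step s a → t ∈ S → Path S t y u → Path S s (a :: y) u

variable {B} {S : Set B.σ}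

lemma Path.ne_nil {s t : B.σ} {y : List α} (h : B.Path S s y t) : y ≠ [] := by
  cases h <;> simp

lemma Path.append {s t u : B.σ} {y z : List α} (hy : B.Path S s y t) (ht : t ∈ S)
    (hz : B.Path S t z u) : B.Path S s (y ++ z) u := by
  induction hy with
  | single hst => exact .cons hst ht hz
  | cons hst hS _ ih => exact .cons hst hS (ih ht hz)

lemma Path.exists_run [Inhabited α] {s t : B.σ} {y : List α} (h : B.Path S s y t)
    {p : List α} {w : ℕ → α} (hw : prefW (p ++ y) w) :
    ∃ ρ : ℕ → B.σ, ρ p.length = s ∧ ρ (p.length + y.length) = t ∧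
      ∀ m, p.length ≤ m → m < p.length + y.length → ρ (m + 1) ∈ B.step (ρ m) (w m) := by
  induction h generalizing p with
  | @single s t a hst =>
    refine ⟨fun m => if m ≤ p.length then s else t, by simp, by simp, fun m hm hm' => ?_⟩
    obtain rfl : m = p.length := by simp at hm'; omega
    simpa [hw.apply_length] using hst
  | @cons s t u a y hst _ _ ih =>
    obtain ⟨ρ, hρs, hρu, hρ⟩ := ih (p := p ++ [a]) (by simpa using hw)
    simp only [List.length_append, List.length_singleton] at hρs hρu hρ
    refine ⟨fun m => if m ≤ p.length then s else ρ m, by simp, ?_, fun m hm hm' => ?_⟩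
    · simpa [Nat.add_right_comm, ← Nat.add_assoc] using hρu
    · rcases hm.eq_or_lt with rfl | hlt
      · simpa [hρs, hw.apply_length] using hst
      · simp only [List.length_cons] at hm'
        simpa [show ¬ m ≤ p.length by omega, show ¬ m + 1 ≤ p.length by omega]
          using hρ m hlt (by omega)

lemma path_sliceW {w : ℕ → α} {r : ℕ → B.σ} (hr : ∀ t, r (t + 1) ∈ B.step (r t) (w t))
    (a m : ℕ) (hS : ∀ j, 0 < j → j ≤ m → r (a + j) ∈ S) :
    B.Path S (r a) (sliceW w a (m + 1)) (r (a + (m + 1))) := by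
  induction m generalizing a with
  | zero => simpa [sliceW] using Path.single (hr a)
  | succ m ih =>
    rw [sliceW_succ]
    refine .cons (hr a) (hS 1 one_pos (by omega)) ?_
    rw [show a + (m + 1 + 1) = a + 1 + (m + 1) by omega]
    exact ih (a + 1) fun j hj hjm => by
      simpa [Nat.add_assoc, Nat.add_comm 1] using hS (j + 1) (by omega) (by omega)

lemma exists_run_of_pieces {w : ℕ → α} {τ : ℕ → ℕ} (hτ : StrictMono τ) (hτ0 : τ 0 = 0)
    {ρ : ℕ → ℕ → B.σ}
    (hρ : ∀ n m, τ n ≤ m → m < τ (n + 1) → ρ n (m + 1) ∈ B.step (ρ n m) (w m))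
    (hglue : ∀ n, ρ (n + 1) (τ (n + 1)) = ρ n (τ (n + 1))) :
    ∃ r : ℕ → B.σ, (∀ t, r (t + 1) ∈ B.step (r t) (w t)) ∧ ∀ n, r (τ n) = ρ n (τ n) := by
  classical
  obtain ⟨idx, hidx⟩ : ∃ idx : ℕ → ℕ, ∀ t n, idx t = n ↔ τ n ≤ t ∧ t < τ (n + 1) := by
    have hex : ∀ t, ∃ k, t < τ (k + 1) := fun t =>
      ⟨t, (Nat.lt_succ_self t).trans_le (hτ.id_le _)⟩
    refine ⟨fun t => Nat.find (hex t), fun t n => ?_⟩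
    rw [Nat.find_eq_iff]
    cases n with
    | zero => simp [hτ0]
    | succ n =>
      refine ⟨fun ⟨h, hmin⟩ => ⟨not_lt.mp (hmin n n.lt_succ_self), h⟩,
        fun ⟨h, h'⟩ => ⟨h', fun m hm => not_lt.mpr ((hτ.monotone (by omega)).trans h)⟩⟩
  refine ⟨fun t => ρ (idx t) t, fun t => ?_, fun n => ?_⟩
  · obtain ⟨hlo, hhi⟩ := (hidx t _).mp rfl
    rcases (Nat.succ_le_of_lt hhi).lt_or_eq with hlt | hend
    · simp only [(hidx (t + 1) (idx t)).mpr ⟨by omega, hlt⟩]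
      exact hρ _ t hlo hhi
    · have hnext : idx (t + 1) = idx t + 1 :=
        (hidx _ _).mpr ⟨hend.ge, (show t + 1 = _ from hend) ▸ hτ (idx t + 1).lt_succ_self⟩
      simp only [hnext]
      rw [show t + 1 = τ (idx t + 1) from hend, hglue, ← show t + 1 = τ (idx t + 1) from hend]
      exact hρ _ t hlo hhi
  · simp only [(hidx (τ n) n).mpr ⟨le_rfl, hτ n.lt_succ_self⟩]

theorem mem_lang_of_paths [Inhabited α] {w : ℕ → α} {ys : ℕ → List α} {s : ℕ → B.σ}
    (hw : isConcatW [] ys w) (hstart : s 0 ∈ B.start)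
    (hpath : ∀ n, B.Path Set.univ (s n) (ys n) (s (n + 1)))
    (hacc : ∀ n, s (n + 1) ∈ B.accept) : w ∈ B.lang := by
  set p : ℕ → List α := fun n => ((List.range n).map ys).flatten
  have hp : ∀ n, p (n + 1) = p n ++ ys n := by simp [p, List.range_succ]
  choose ρ hρs hρt hρ using fun n => (hpath n).exists_run (p := p n) (w := w)
    (by simpa [← hp] using hw (n + 1))
  have hτ : StrictMono fun n => (p n).length := strictMono_nat_of_lt_succ fun n => by
    simpa [hp] using List.length_pos_iff.mpr (hpath n).ne_nil
  obtain ⟨r, hr, hrτ⟩ := exists_run_of_pieces (w := w) hτ (by simp [p])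
    (fun n m h h' => hρ n m h (by simpa [hp] using h'))
    (fun n => by rw [hρs, hp, List.length_append, hρt])
  have hr0 : r 0 = s 0 := by simpa [p] using (hrτ 0).trans (hρs 0)
  refine ⟨r, hr0 ▸ hstart, hr, fun N => ⟨(p (N + 1)).length, (N.le_succ).trans (hτ.id_le _), ?_⟩⟩
  rw [hrτ, hρs]
  exact hacc N

theorem exists_paths_of_mem_lang [Inhabited α] {w : ℕ → α} (hw : w ∈ B.lang) :
    ∃ (ys : ℕ → List α) (s : ℕ → B.σ), isConcatW [] ys w ∧ s 0 ∈ B.start ∧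
      ∀ n, B.Path B.acceptᶜ (s n) (ys n) (s (n + 1)) ∧ s (n + 1) ∈ B.accept := by
  obtain ⟨r, hstart, hr, hinf⟩ := hw
  -- time `0` counts as a visit, so that the first piece starts at the beginning of `w`
  set visit : ℕ → Prop := fun m => m = 0 ∨ r m ∈ B.accept
  have hvisit : (Set.ofPred visit).Infinite := Set.infinite_of_forall_exists_gt fun a => by
    obtain ⟨m, hm, hacc⟩ := hinf (a + 1)
    exact ⟨m, Or.inr hacc, hm⟩
  set τ := Nat.nth visit
  have hτ : StrictMono τ := Nat.nth_strictMono hvisit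
  have hτ0 : τ 0 = 0 := Nat.nth_zero_of_zero (Or.inl rfl)
  have hacc : ∀ n, r (τ (n + 1)) ∈ B.accept := fun n =>
    (Nat.nth_mem_of_infinite hvisit (n + 1)).resolve_left
      (by simpa [hτ0] using hτ n.succ_pos : 0 < τ (n + 1)).ne'
  have hgap : ∀ n t, τ n < t → t < τ (n + 1) → r t ∉ B.accept := fun n t h h' ht =>
    (Nat.le_nth_of_lt_nth_succ h' (Or.inr ht)).not_gt h
  refine ⟨fun n => sliceW w (τ n) (τ (n + 1) - τ n), fun n => r (τ n), fun n => ?_,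
    by simpa [hτ0] using hstart, fun n => ⟨?_, hacc n⟩⟩
  · have hflat : ∀ n, ((List.range n).map fun i => sliceW w (τ i) (τ (i + 1) - τ i)).flatten
        = sliceW w 0 (τ n) := by
      intro n
      induction n with
      | zero => simp [hτ0, sliceW]
      | succ n ih =>
        have happ := sliceW_append w 0 (τ n) (τ (n + 1) - τ n)
        rw [Nat.zero_add, Nat.add_sub_cancel' (hτ n.lt_succ_self).le] at happ
        rw [List.range_succ, List.map_append, List.flatten_append, ih, List.map_singleton,
          List.flatten_singleton, happ]
    simpa [hflat] using prefW_sliceW w (τ n)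
  · obtain ⟨m, hm⟩ := Nat.exists_eq_add_of_lt (hτ (show n < n + 1 by omega))
    simp only
    rw [hm, show τ n + m + 1 - τ n = m + 1 by omega, Nat.add_assoc]
    exact path_sliceW hr (τ n) m fun j hj hjm => hgap n _ (by omega) (by omega)

end NBA

section Lasso

variable {α S ι : Type} {P : ι → Type} (M : DFA α S) (target : ι → S) (D : ∀ i, DFA α (P i))

def lassoLang [Inhabited α] : Set (ℕ → α) :=
  { w | ∃ (i : ι) (x : List α) (ys : ℕ → List α), M.eval x = target i ∧
      (∀ n, ys n ≠ [] ∧ ys n ∈ (D i).accepts) ∧ isConcatW x ys w }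

def lassoEntry (i : ι) : S ⊕ Σ i, P i × Bool := .inr ⟨i, (D i).start, true⟩

/-- The paper's ε-transitions are folded into the letter transitions: the leading copy of `M`
jumps to the entry of component `i` on the letter that brings `M` to `target i`, and component
`i` returns to its entry on the letter that completes a word of `D i`. The flag separates the
entry, the only accepting state, from `(D i).start` reached in the middle of a word. -/
def lassoNBA [Fintype S] [Fintype ι] [∀ i, Fintype (P i)] : NBA α where
  σ := S ⊕ Σ i, P i × Bool
  fin := inferInstance
  start := {s | s = .inl M.start ∨ ∃ i, target i = M.start ∧ s = lassoEntry D i}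
  step
    | .inl p, a => {s | s = .inl (M.step p a) ∨ ∃ i, target i = M.step p a ∧ s = lassoEntry D i}
    | .inr ⟨i, p, _⟩, a =>
      {s | s = .inr ⟨i, (D i).step p a, false⟩ ∨
        (D i).step p a ∈ (D i).accept ∧ s = lassoEntry D i}
  accept := Set.range (lassoEntry D)

variable {M target D}

lemma lassoEntry_injective : Function.Injective (lassoEntry (S := S) D) := fun i j h => by
  simpa [lassoEntry] using congrArg (Sum.elim (fun _ => none) (fun c => some c.1)) h

lemma lassoEntry_ne_inr_false {i j : ι} {p : P j} : lassoEntry (S := S) D i ≠ .inr ⟨j, p, false⟩ :=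
  fun h => by simpa [lassoEntry] using congrArg (Sum.elim (fun _ => false) (fun c => c.2.2)) h

variable [Fintype S] [Fintype ι] [∀ i, Fintype (P i)]

lemma card_lassoNBA :
    @Fintype.card _ (lassoNBA M target D).fin = Fintype.card S + ∑ i, Fintype.card (P i) * 2 := by
  change Fintype.card (S ⊕ Σ i, P i × Bool) = _
  simp [Fintype.card_sigma]

lemma card_lassoNBA_le {m : ℕ} (hP : ∀ i, Fintype.card (P i) ≤ m) :
    @Fintype.card _ (lassoNBA M target D).fin ≤ Fintype.card S + Fintype.card ι * (2 * m) := by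
  rw [card_lassoNBA]
  gcongr
  simpa [mul_comm] using Finset.sum_le_card_nsmul Finset.univ _ (m * 2) fun i _ =>
    Nat.mul_le_mul_right 2 (hP i)

lemma lassoNBA_path_inl {i : ι} {x : List α} (hx : x ≠ []) :
    ∀ {p : S}, target i = M.evalFrom p x →
      (lassoNBA M target D).Path Set.univ (.inl p) x (lassoEntry D i) := by
  induction x with
  | nil => exact absurd rfl hx
  | cons a y ih =>
    intro p h
    rcases eq_or_ne y [] with rfl | hy
    · exact .single (Or.inr ⟨i, h, rfl⟩)
    · exact .cons (Or.inl rfl) trivial (ih hy h)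

lemma lassoNBA_path_inr {i : ι} {y : List α} (hy : y ≠ []) :
    ∀ {p : P i} {b : Bool}, (D i).evalFrom p y ∈ (D i).accept →
      (lassoNBA M target D).Path Set.univ (.inr ⟨i, p, b⟩) y (lassoEntry D i) := by
  induction y with
  | nil => exact absurd rfl hy
  | cons a z ih =>
    intro p b h
    rcases eq_or_ne z [] with rfl | hz
    · exact .single (Or.inr ⟨h, rfl⟩)
    · exact .cons (Or.inl rfl) trivial (ih hz h)

lemma target_eq_of_lassoNBA_path_inl {j : ι} {p : S} {y : List α}
    (h : (lassoNBA M target D).Path (lassoNBA M target D).acceptᶜ (.inl p) y (lassoEntry D j)) :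
    target j = M.evalFrom p y := by
  suffices ∀ {s y e}, (lassoNBA M target D).Path (lassoNBA M target D).acceptᶜ s y e →
      ∀ p, s = .inl p → e = lassoEntry D j → target j = M.evalFrom p y from this h p rfl rfl
  intro s y e h
  induction h with
  | single hst =>
    rintro p rfl rfl
    rcases hst with h | ⟨i, hi, h⟩
    · exact absurd h Sum.inr_ne_inl
    · exact lassoEntry_injective h ▸ hi
  | cons hst ht _ ih =>
    rintro p rfl he
    rcases hst with rfl | ⟨i, -, rfl⟩
    · exact ih _ rfl he
    · exact absurd ⟨i, rfl⟩ ht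

lemma eq_and_mem_accept_of_lassoNBA_path_inr {i j : ι} {p : P i} {b : Bool} {y : List α}
    (h : (lassoNBA M target D).Path (lassoNBA M target D).acceptᶜ (.inr ⟨i, p, b⟩) y
      (lassoEntry D j)) :
    j = i ∧ (D i).evalFrom p y ∈ (D i).accept := by
  suffices ∀ {s y e}, (lassoNBA M target D).Path (lassoNBA M target D).acceptᶜ s y e →
      ∀ p b, s = .inr ⟨i, p, b⟩ → e = lassoEntry D j → j = i ∧ (D i).evalFrom p y ∈ (D i).accept
    from this h p b rfl rfl
  intro s y e h
  induction h with
  | single hst =>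
    rintro p b rfl rfl
    rcases hst with h | ⟨hacc, h⟩
    · exact absurd h lassoEntry_ne_inr_false
    · exact ⟨lassoEntry_injective h, hacc⟩
  | cons hst ht _ ih =>
    rintro p b rfl he
    rcases hst with rfl | ⟨-, rfl⟩
    · exact ih _ _ rfl he
    · exact absurd ⟨i, rfl⟩ ht

lemma mem_accepts_of_lassoNBA_paths {i : ι} {ys : ℕ → List α} {s : ℕ → (lassoNBA M target D).σ}
    (h0 : s 0 = lassoEntry D i)
    (h : ∀ n, (lassoNBA M target D).Path (lassoNBA M target D).acceptᶜ (s n) (ys n) (s (n + 1)) ∧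
      s (n + 1) ∈ (lassoNBA M target D).accept) (n : ℕ) :
    ys n ≠ [] ∧ ys n ∈ (D i).accepts := by
  have hs : ∀ n, s n = lassoEntry D i := by
    intro n
    induction n with
    | zero => exact h0
    | succ n ih =>
      obtain ⟨hpath, j, hj⟩ := h n
      rw [ih, ← hj] at hpath
      rw [← hj, (eq_and_mem_accept_of_lassoNBA_path_inr hpath).1]
  have hpath := (h n).1
  rw [hs, hs] at hpath
  exact ⟨hpath.ne_nil, (eq_and_mem_accept_of_lassoNBA_path_inr hpath).2⟩

variable [Inhabited α]

theorem lassoNBA_lang : (lassoNBA M target D).lang = lassoLang M target D := by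
  ext w
  constructor
  · intro hw
    obtain ⟨ys, s, hcat, hstart, h⟩ := NBA.exists_paths_of_mem_lang hw
    rcases hstart with h0 | ⟨i, hi, h0⟩
    · obtain ⟨i, hi⟩ := (h 0).2
      have hpath := (h 0).1
      rw [h0, ← hi] at hpath
      exact ⟨i, ys 0, fun n => ys (n + 1), (target_eq_of_lassoNBA_path_inl hpath).symm,
        mem_accepts_of_lassoNBA_paths hi.symm (fun n => h (n + 1)),
        isConcatW_iff_append_head.mp hcat⟩
    · exact ⟨i, [], ys, hi.symm, mem_accepts_of_lassoNBA_paths h0 h, hcat⟩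
  · rintro ⟨i, x, ys, hx, hys, hcat⟩
    have hloop : ∀ n b, (lassoNBA M target D).Path Set.univ (.inr ⟨i, (D i).start, b⟩) (ys n)
        (lassoEntry D i) := fun n _ => lassoNBA_path_inr (hys n).1 (hys n).2
    rcases eq_or_ne x [] with rfl | hx0
    · exact NBA.mem_lang_of_paths (s := fun _ => lassoEntry D i) hcat (Or.inr ⟨i, hx.symm, rfl⟩)
        (fun n => hloop n true) (fun _ => ⟨i, rfl⟩)
    · refine NBA.mem_lang_of_paths (ys := fun | 0 => x ++ ys 0 | n + 1 => ys (n + 1))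
        (s := fun | 0 => .inl M.start | _ + 1 => lassoEntry D i)
        (isConcatW_iff_append_head.mpr (by simpa using isConcatW_iff_append_head.mp hcat))
        (Or.inl rfl) (fun n => ?_) (fun _ => ⟨i, rfl⟩)
      cases n with
      | zero => exact (lassoNBA_path_inl hx0 hx.symm).append trivial (hloop 0 true)
      | succ n => exact hloop (n + 1) true

end Lasso

lemma lasso_size_bound {n k e : ℕ} (hk : 1 ≤ k) :
    n + n * k * (2 * (n * k ^ e)) ≤ 3 * (n ^ 2 * k ^ (e + 1)) := by
  have hn : n ≤ n ^ 2 * k ^ (e + 1) :=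
    calc n ≤ n ^ 2 := by nlinarith
      _ ≤ n ^ 2 * k ^ (e + 1) := Nat.le_mul_of_pos_right _ (Nat.one_le_pow _ _ hk)
  have : n * k * (2 * (n * k ^ e)) = 2 * (n ^ 2 * k ^ (e + 1)) := by ring
  omega

def DFA.fromTo {α σ : Type} (M : DFA α σ) (s t : σ) : DFA α σ := ⟨M.step, s, {t}⟩

lemma DFA.mem_accepts_fromTo {α σ : Type} (M : DFA α σ) {s t : σ} {y : List α} :
    y ∈ (M.fromTo s t).accepts ↔ M.evalFrom s y = t := Iff.rfl

attribute [local instance] FDFA.finS FDFA.finP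

namespace FDFA

variable {α : Type} (F : FDFA α)

abbrev AccIdx : Type := Σ u : F.S, {q : F.Pσ u // q ∈ (F.A u).accept}

noncomputable instance : Fintype F.AccIdx := by
  classical exact inferInstanceAs (Fintype (Σ u : F.S, {q : F.Pσ u // q ∈ (F.A u).accept}))

lemma card_accIdx_le {k : ℕ} (hk : ∀ s, Fintype.card (F.Pσ s) ≤ k) :
    Fintype.card F.AccIdx ≤ Fintype.card F.S * k := by
  classical
  rw [Fintype.card_sigma]
  simpa using Finset.sum_le_card_nsmul Finset.univ _ k fun u _ =>
    (Fintype.card_subtype_le (· ∈ (F.A u).accept)).trans (hk u)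

def underDFA (u : F.S) (q : F.Pσ u) : DFA α ((F.S × F.Pσ u) × F.Pσ u) :=
  ((F.M.fromTo u u).inter ((F.A u).fromTo (F.A u).start q)).inter ((F.A u).fromTo q q)

def overDFA (u : F.S) (q : F.Pσ u) : DFA α (F.S × F.Pσ u) :=
  (F.M.fromTo u u).inter ((F.A u).fromTo (F.A u).start q)

lemma mem_accepts_underDFA {u : F.S} {q : F.Pσ u} {y : List α} :
    y ∈ (F.underDFA u q).accepts ↔ y ∈ underLoop F u q := by
  simp only [underDFA, DFA.accepts_inter, Language.mem_inf, DFA.mem_accepts_fromTo]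
  exact and_assoc

lemma mem_accepts_overDFA {u : F.S} {q : F.Pσ u} {y : List α} :
    y ∈ (F.overDFA u q).accepts ↔ y ∈ overLoop F u q := by
  simp only [overDFA, DFA.accepts_inter, Language.mem_inf, DFA.mem_accepts_fromTo]
  rfl

lemma lassoLang_accIdx [Inhabited α] {P : F.AccIdx → Type} (D : ∀ i, DFA α (P i))
    (Loop : ∀ u, F.Pσ u → Set (List α))
    (hD : ∀ u q hq y, y ∈ (D ⟨u, q, hq⟩).accepts ↔ y ∈ Loop u q) :
    lassoLang F.M Sigma.fst D =
      { w | ∃ (u : F.S) (q : F.Pσ u), q ∈ (F.A u).accept ∧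
        ∃ (x : List α) (ys : ℕ → List α), F.M.eval x = u ∧
          (∀ i, ys i ≠ [] ∧ ys i ∈ Loop u q) ∧ isConcatW x ys w } := by
  ext w
  constructor
  · rintro ⟨⟨u, q, hq⟩, x, ys, hx, hys, hcat⟩
    exact ⟨u, q, hq, x, ys, hx, fun n => ⟨(hys n).1, (hD u q hq _).mp (hys n).2⟩, hcat⟩
  · rintro ⟨u, q, hq, x, ys, hx, hys, hcat⟩
    exact ⟨⟨u, q, hq⟩, x, ys, hx, fun n => ⟨(hys n).1, (hD u q hq _).mpr (hys n).2⟩, hcat⟩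

lemma one_le_of_forall_card_le {k : ℕ} (hk : ∀ s, Fintype.card (F.Pσ s) ≤ k) : 1 ≤ k :=
  (Fintype.card_pos_iff.mpr ⟨(F.A F.M.start).start⟩).trans_le (hk _)

noncomputable def underNBA : NBA α :=
  lassoNBA (ι := F.AccIdx) F.M Sigma.fst fun i => F.underDFA i.1 i.2.1

noncomputable def overNBA : NBA α :=
  lassoNBA (ι := F.AccIdx) F.M Sigma.fst fun i => F.overDFA i.1 i.2.1

theorem underNBA_lang [Inhabited α] : F.underNBA.lang = underLang F := by
  rw [underNBA, lassoNBA_lang,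
    lassoLang_accIdx _ _ (underLoop F) fun _ _ _ _ => F.mem_accepts_underDFA]
  rfl

theorem overNBA_lang [Inhabited α] : F.overNBA.lang = overLang F := by
  rw [overNBA, lassoNBA_lang,
    lassoLang_accIdx _ _ (overLoop F) fun _ _ _ _ => F.mem_accepts_overDFA]
  rfl

lemma card_lassoNBA_accIdx_le {P : F.AccIdx → Type} [∀ i, Fintype (P i)] (D : ∀ i, DFA α (P i))
    {k e : ℕ} (hk : ∀ s, Fintype.card (F.Pσ s) ≤ k)
    (hP : ∀ i, Fintype.card (P i) ≤ Fintype.card F.S * k ^ e) :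
    @Fintype.card _ (lassoNBA F.M Sigma.fst D).fin ≤ 3 * (Fintype.card F.S ^ 2 * k ^ (e + 1)) :=
  calc _ ≤ Fintype.card F.S + Fintype.card F.AccIdx * (2 * (Fintype.card F.S * k ^ e)) :=
        card_lassoNBA_le hP
    _ ≤ Fintype.card F.S + Fintype.card F.S * k * (2 * (Fintype.card F.S * k ^ e)) := by
        gcongr
        exact F.card_accIdx_le hk
    _ ≤ _ := lasso_size_bound (F.one_le_of_forall_card_le hk)

theorem card_underNBA_le {k : ℕ} (hk : ∀ s, Fintype.card (F.Pσ s) ≤ k) :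
    @Fintype.card _ F.underNBA.fin ≤ 3 * (Fintype.card F.S ^ 2 * k ^ 3) :=
  F.card_lassoNBA_accIdx_le _ (e := 2) hk fun i => by
    simpa [Fintype.card_prod, sq, mul_assoc] using
      Nat.mul_le_mul_left _ (Nat.mul_le_mul (hk i.1) (hk i.1))

theorem card_overNBA_le {k : ℕ} (hk : ∀ s, Fintype.card (F.Pσ s) ≤ k) :
    @Fintype.card _ F.overNBA.fin ≤ 3 * (Fintype.card F.S ^ 2 * k ^ 2) :=
  F.card_lassoNBA_accIdx_le _ (e := 1) hk fun i => by
    simpa [Fintype.card_prod] using Nat.mul_le_mul_left _ (hk i.1)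

end FDFA

/-- If the leading automaton of `F` has `n` states and every progress automaton
has at most `k` states, then the under-approximation Büchi automaton can be
realized with `O(n²k³)` states and the over-approximation one with `O(n²k²)`
states. -/
theorem stmt_16 {α : Type} [Inhabited α] :
    ∃ c : ℕ, ∀ (F : FDFA α) (n k : ℕ),
      @Fintype.card F.S F.finS = n →
      (∀ s : F.S, @Fintype.card (F.Pσ s) (F.finP s) ≤ k) →
      (∃ B : NBA α, @Fintype.card B.σ B.fin ≤ c * (n ^ 2 * k ^ 3) ∧
        UP B.lang = underUP F) ∧
      (∃ B : NBA α, @Fintype.card B.σ B.fin ≤ c * (n ^ 2 * k ^ 2) ∧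
        UP B.lang = overUP F) := by
  refine ⟨3, fun F n k hn hk => ⟨⟨F.underNBA, ?_, congrArg UP F.underNBA_lang⟩,
    ⟨F.overNBA, ?_, congrArg UP F.overNBA_lang⟩⟩⟩
  · exact hn ▸ F.card_underNBA_le hk
  · exact hn ▸ F.card_overNBA_le hk
end

section
/- Fix a leading DFA M and ω-language L, and a state u of M. Define x ≈_{R'}^u y iff for every v ∈ Σ*, (M(uxv) = u ∧ u(xv)^ω ∈ L) ⟺ (M(uyv) = u ∧ u(yv)^ω ∈ L), and x ≈_{S'}^u y iff M(ux) = M(uy) and ∀v, M(uxv) = u implies (u(xv)^ω ∈ L ⟺ u(yv)^ω ∈ L). Then ≈_{S'}^u refines ≈_{R'}^u (x ≈_{S'}^u y implies x ≈_{R'}^u y), and hence the index of ≈_{R'}^u is at most |Q| · |≈_P^u|. -/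
/-- The congruence `≈_{S'}^u` relative to a fixed leading DFA `M`. -/
def approxS' {α σ : Type} [Inhabited α] (M : DFA α σ) (L : Set (ℕ → α))
    (u x y : List α) : Prop :=
  M.eval (u ++ x) = M.eval (u ++ y) ∧
    ∀ v : List α, M.eval (u ++ x ++ v) = M.eval u →
      (upw u (x ++ v) ∈ L ↔ upw u (y ++ v) ∈ L)

/-- The congruence `≈_{R'}^u` relative to a fixed leading DFA `M`. -/
def approxR' {α σ : Type} [Inhabited α] (M : DFA α σ) (L : Set (ℕ → α))
    (u x y : List α) : Prop :=
  ∀ v : List α,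
    (M.eval (u ++ x ++ v) = M.eval u ∧ upw u (x ++ v) ∈ L) ↔
    (M.eval (u ++ y ++ v) = M.eval u ∧ upw u (y ++ v) ∈ L)

lemma refinesSR {α σ : Type} [Inhabited α] (M : DFA α σ) (L : Set (ℕ → α))
    (u x y : List α) (h : approxS' M L u x y) : approxR' M L u x y := by
  obtain ⟨h1, h2⟩ := h
  intro v
  have key : ∀ z : List α, M.eval (u ++ z ++ v) = M.evalFrom (M.eval (u ++ z)) v := by
    intro z
    simp [DFA.eval, DFA.evalFrom_of_append]
  have hev : M.eval (u ++ x ++ v) = M.eval (u ++ y ++ v) := by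
    rw [key x, key y, h1]
  constructor
  · rintro ⟨ha, hb⟩
    exact ⟨hev ▸ ha, (h2 v ha).mp hb⟩
  · rintro ⟨ha, hb⟩
    have ha' : M.eval (u ++ x ++ v) = M.eval u := hev.trans ha
    exact ⟨ha', (h2 v ha').mpr hb⟩

/-- `≈_{S'}^u` refines `≈_{R'}^u`, hence the index of `≈_{R'}^u` is at most
`|Q| · |≈_P^u|`. -/
theorem stmt_18 {α σ : Type} [Inhabited α] [Fintype σ] (M : DFA α σ)
    (L : Set (ℕ → α)) (u : List α) :
    (∀ x y : List α, approxS' M L u x y → approxR' M L u x y) ∧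
    ∀ kp : ℕ,
      (∃ R : Finset (List α), R.card ≤ kp ∧
        ∀ x : List α, ∃ y ∈ R, approxP L u x y) →
      ∃ R' : Finset (List α), R'.card ≤ Fintype.card σ * kp ∧
        ∀ x : List α, ∃ y ∈ R', approxR' M L u x y := by

  classical
  refine ⟨refinesSR M L u, ?_⟩
  rintro kp ⟨R, hcard, hcov⟩
  set f : σ × List α → List α := fun p =>
    if h : ∃ z, M.eval (u ++ z) = p.1 ∧ approxP L u z p.2 then h.choose else [] with hf
  refine ⟨(Finset.univ ×ˢ R).image f, ?_, ?_⟩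
  · calc ((Finset.univ ×ˢ R).image f).card ≤ (Finset.univ ×ˢ R).card :=
          Finset.card_image_le
      _ = Fintype.card σ * R.card := by simp [Finset.card_product]
      _ ≤ Fintype.card σ * kp := Nat.mul_le_mul_left _ hcard
  · intro x
    obtain ⟨y, hy, hxy⟩ := hcov x
    have hex : ∃ z, M.eval (u ++ z) = (M.eval (u ++ x), y).1 ∧ approxP L u z (M.eval (u ++ x), y).2 :=
      ⟨x, rfl, hxy⟩
    refine ⟨f (M.eval (u ++ x), y),
      Finset.mem_image.mpr ⟨(M.eval (u ++ x), y), by simp [hy], rfl⟩, ?_⟩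
    have hspec : M.eval (u ++ f (M.eval (u ++ x), y)) = M.eval (u ++ x) ∧
        approxP L u (f (M.eval (u ++ x), y)) y := by
      rw [hf]; simp only [dif_pos hex]
      exact hex.choose_spec
    have hP : approxP L u x (f (M.eval (u ++ x), y)) :=
      fun v => (hxy v).trans ((hspec.2 v).symm)
    exact refinesSR M L u _ _ ⟨hspec.1.symm, fun v _ => hP v⟩
end

section
/- Let L be an ω-language and M a DFA such that for all states and all x, y ∈ Σ*, M(x) = M(y) ⟺ x ∼_L y (M is consistent with ∼_L). Then for every state u of M and all x₁, x₂ ∈ Σ*, if x₁ ≈_S^u x₂ then M(u x₁) = M(u x₂) and for every experiment v ∈ Σ*: (M(u x₁ v) = u ∧ u(x₁ v)^ω ∈ L) ⟺ (M(u x₂ v) = u ∧ u(x₂ v)^ω ∈ L); i.e., no experiment used by the syntactic tree-based learner can separate ≈_S^u-equivalent words. -/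
/-- The syntactic progress congruence `≈_S^u`. -/
def approxS {α : Type} [Inhabited α] (L : Set (ℕ → α)) (u x y : List α) : Prop :=
  simRel L (u ++ x) (u ++ y) ∧
    ∀ v : List α, simRel L (u ++ x ++ v) u →
      (upw u (x ++ v) ∈ L ↔ upw u (y ++ v) ∈ L)

/-- If `M` is consistent with `∼_L`, then no experiment of the syntactic
tree-based learner separates `≈_S^u`-equivalent words. -/
theorem stmt_19 {α σ : Type} [Inhabited α] [Fintype σ] (M : DFA α σ)
    (L : Set (ℕ → α))
    (hcons : ∀ x y : List α, M.eval x = M.eval y ↔ simRel L x y)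
    (u x₁ x₂ : List α) (h : approxS L u x₁ x₂) :
    M.eval (u ++ x₁) = M.eval (u ++ x₂) ∧
    ∀ v : List α,
      (M.eval (u ++ x₁ ++ v) = M.eval u ∧ upw u (x₁ ++ v) ∈ L) ↔
      (M.eval (u ++ x₂ ++ v) = M.eval u ∧ upw u (x₂ ++ v) ∈ L) := by
  have he : M.eval (u ++ x₁) = M.eval (u ++ x₂) := (hcons _ _).mpr h.1
  refine ⟨he, fun v => ?_⟩
  have hev : M.eval (u ++ x₁ ++ v) = M.eval (u ++ x₂ ++ v) := by
    simp only [DFA.eval, M.evalFrom_of_append] at he ⊢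
    rw [he]
  constructor
  · rintro ⟨h1, h2⟩
    exact ⟨hev ▸ h1, (h.2 v ((hcons _ _).mp h1)).mp h2⟩
  · rintro ⟨h1, h2⟩
    have h1' : M.eval (u ++ x₁ ++ v) = M.eval u := hev.trans h1
    exact ⟨h1', (h.2 v ((hcons _ _).mp h1')).mpr h2⟩
end
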